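/- arXiv:2505.04296 — 7 statements merged into one kernel-verified Lean document; each statement's English description precedes it below -/
import Mathlib

section
/- Let f and g be monic polynomials over ℂ of degrees m and n with companion matrices C_f and C_g. Then the composition g(f)(t) equals det(t·I_{mn} − M), where M is the block companion matrix of the matrix polynomial q(t) = f(t)·I_n − C_g, i.e., the mn×mn block matrix with blocks I_n on the subdiagonal and last block column (−a₀I_n + C_g, −a₁I_n, …, −a_{m-1}I_n)ᵀ. -/
/-!
The matrix in the statement is the block companion matrix `L` of the matrix polynomial
`P(t) = t ^ m • 1 + ∑ i, t ^ i • A i = f(t) • 1 - C_g`, where `A i = a i • 1 - [i = 0] • C_g`.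
Over a field and for `x ≠ 0`, taking the Schur complement of the top left block `x • 1` of
`x • 1 - L` gives `x ^ n` times the same determinant with one block fewer, the coefficient `A 0`
being folded into `A 1` as `x⁻¹ • A 0`; by induction `det (x • 1 - L) = det P(x)`. Evaluating at
`x = X` in the fraction field of the polynomial ring gives `charpoly L = det P(X)`. Finally `P(X)`
is the image of `X • 1 - C_g` under `p ↦ p.comp f`, so `det P(X) = (charpoly C_g).comp f`, and
`charpoly C_g = g` is the case of `1 × 1` blocks of the same identity.
-/

open Polynomial Matrix

/-- The Frobenius companion matrix of the monic polynomial
`t ^ n + a (n-1) * t ^ (n-1) + ⋯ + a 0`. -/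
def companion (n : ℕ) (a : Fin n → ℂ) : Matrix (Fin n) (Fin n) ℂ :=
  Matrix.of fun i j => if (j : ℕ) = n - 1 then -a i else if (i : ℕ) = (j : ℕ) + 1 then 1 else 0

variable {R : Type*} [CommRing R] {ι : Type*} [DecidableEq ι]

/-- The block companion matrix of the monic matrix polynomial `t ^ m • 1 + ∑ i, t ^ i • A i`. -/
def blockCompanion {m : ℕ} (A : Fin m → Matrix ι ι R) : Matrix (Fin m × ι) (Fin m × ι) R :=
  Matrix.of fun ip jq =>
    if (jq.1 : ℕ) = m - 1 then -A ip.1 ip.2 jq.2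
    else if (ip.1 : ℕ) = jq.1 + 1 then (1 : Matrix ι ι R) ip.2 jq.2 else 0

theorem blockCompanion_map {S : Type*} [CommRing S] {m : ℕ} (A : Fin m → Matrix ι ι R)
    (φ : R →+* S) : (blockCompanion A).map φ = blockCompanion fun i => (A i).map φ := by
  ext ⟨i, p⟩ ⟨j, q⟩
  simp only [blockCompanion, map_apply, of_apply, apply_ite φ, map_neg, map_zero, one_apply]
  split_ifs <;> simp

def finSuccProdEquiv (k : ℕ) (ι : Type*) : Fin (k + 1) × ι ≃ ι ⊕ Fin k × ι where
  toFun x := Fin.cases (Sum.inl x.2) (fun i => Sum.inr (i, x.2)) x.1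
  invFun := Sum.elim (fun p => (0, p)) (fun ip => (ip.1.succ, ip.2))
  left_inv := by
    rintro ⟨i, p⟩
    induction i using Fin.cases <;> simp
  right_inv := by rintro (p | ⟨i, p⟩) <;> simp

theorem reindex_smul_one_sub_blockCompanion {k : ℕ} (A : Fin (k + 2) → Matrix ι ι R) (x : R) :
    reindex (finSuccProdEquiv (k + 1) ι) (finSuccProdEquiv (k + 1) ι) (x • 1 - blockCompanion A) =
      fromBlocks (x • 1) (of fun p jq => if (jq.1 : ℕ) = k then A 0 p jq.2 else 0)
        (of fun ip q => if ip.1 = 0 then -(1 : Matrix ι ι R) ip.2 q else 0)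
        (x • 1 - blockCompanion (Fin.tail A)) := by
  ext (p | ⟨i, p⟩) (q | ⟨j, q⟩) <;>
    simp [finSuccProdEquiv, blockCompanion, one_apply, (Fin.succ_ne_zero _).symm, Fin.tail,
      neg_ite]

variable [Fintype ι]

theorem det_smul_one_sub_blockCompanion_one (A : Fin 1 → Matrix ι ι R) (x : R) :
    det (x • 1 - blockCompanion A) = det (x • 1 + A 0) := by
  rw [← det_reindex_self (Equiv.uniqueProd ι (Fin 1))]
  congr 1
  ext p q
  simp [blockCompanion, one_apply]

theorem det_smul_one_sub_blockCompanion_succ {K : Type*} [Field K] {k : ℕ}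
    (A : Fin (k + 2) → Matrix ι ι K) {x : K} (hx : x ≠ 0) :
    det (x • 1 - blockCompanion A) =
      x ^ Fintype.card ι * det (x • 1 - blockCompanion (Fin.tail A + Pi.single 0 (x⁻¹ • A 0))) := by
  have hinv : (x • 1 : Matrix ι ι K) * (x⁻¹ • 1) = 1 := by simp [hx]
  have : Invertible (x • 1 : Matrix ι ι K) := ⟨x⁻¹ • 1, by simp [hx], hinv⟩
  rw [← det_reindex_self (finSuccProdEquiv (k + 1) ι), reindex_smul_one_sub_blockCompanion,
    det_fromBlocks₁₁, det_smul, det_one, mul_one, invOf_eq_right_inv hinv]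
  congr 2
  rw [Matrix.mul_smul, Matrix.mul_one, Matrix.smul_mul]
  ext ⟨i, p⟩ ⟨j, q⟩
  simp only [blockCompanion, add_tsub_cancel_right, Fin.tail, one_apply, Matrix.sub_apply,
    Matrix.smul_apply, Prod.mk.injEq, smul_eq_mul, mul_ite, mul_one, mul_zero, of_apply, mul_apply,
    ite_mul, neg_mul, one_mul, zero_mul, Finset.sum_ite_irrel, Finset.sum_neg_distrib,
    Finset.sum_ite_eq, Finset.mem_univ, ↓reduceIte, Finset.sum_const_zero, mul_neg, Pi.add_apply,
    Pi.single_apply, Matrix.add_apply, neg_add_rev]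
  split_ifs <;> simp_all
  ring

theorem det_smul_one_sub_blockCompanion {K : Type*} [Field K] :
    ∀ {m : ℕ} (A : Fin m → Matrix ι ι K) {x : K}, x ≠ 0 →
      det (x • 1 - blockCompanion A) = det (x ^ m • 1 + ∑ i : Fin m, x ^ (i : ℕ) • A i)
  | 0, A, x, _ => by simp
  | 1, A, x, _ => by simp [det_smul_one_sub_blockCompanion_one]
  | k + 2, A, x, hx => by
    rw [det_smul_one_sub_blockCompanion_succ A hx, det_smul_one_sub_blockCompanion _ hx,
      ← det_smul, Fin.sum_univ_succ (n := k + 1)]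
    congr 1
    simp [Finset.sum_add_distrib, smul_add, Finset.smul_sum, Pi.single_apply, smul_smul,
      pow_succ', hx, Fin.tail, add_comm (A 0)]

theorem charpoly_blockCompanion [IsDomain R] {m : ℕ} (A : Fin m → Matrix ι ι R) :
    (blockCompanion A).charpoly =
      det ((X : R[X]) ^ m • 1 + ∑ i : Fin m, (X : R[X]) ^ (i : ℕ) • (A i).map C) := by
  let φ := algebraMap R[X] (FractionRing R[X])
  have hφ : Function.Injective φ := IsFractionRing.injective R[X] (FractionRing R[X])
  have hX : φ X ≠ 0 := (map_ne_zero_iff φ hφ).2 X_ne_zero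
  have hL : φ.mapMatrix (charmatrix (blockCompanion A)) =
      φ X • 1 - blockCompanion fun i => (A i).map (φ.comp C) := by
    rw [← blockCompanion_map]
    ext ip jq
    by_cases h : ip = jq <;> simp [h, one_apply, charmatrix]
  have hP : φ.mapMatrix ((X : R[X]) ^ m • 1 + ∑ i : Fin m, (X : R[X]) ^ (i : ℕ) • (A i).map C) =
      φ X ^ m • 1 + ∑ i : Fin m, φ X ^ (i : ℕ) • (A i).map (φ.comp C) := by
    ext p q
    simp [Matrix.sum_apply, one_apply, apply_ite φ, mul_comm (φ (C _))]
  apply hφ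
  rw [charpoly, RingHom.map_det, RingHom.map_det, hL, hP]
  exact det_smul_one_sub_blockCompanion _ hX

theorem charpoly_companion (n : ℕ) (b : Fin n → ℂ) :
    (companion n b).charpoly = X ^ n + ∑ k, C (b k) * X ^ (k : ℕ) := by
  have h : companion n b = reindex (Equiv.prodUnique (Fin n) (Fin 1))
      (Equiv.prodUnique (Fin n) (Fin 1)) (blockCompanion fun k => of fun _ _ => b k) := by
    ext i j
    simp [companion, blockCompanion]
  rw [h, charpoly_reindex, charpoly_blockCompanion, det_unique]
  simp [Matrix.sum_apply, mul_comm (X ^ _)]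

theorem statement2_general (m n : ℕ) (hm : 0 < m) (a : Fin m → ℂ) (b : Fin n → ℂ)
    (f g : ℂ[X])
    (hf : f = X ^ m + ∑ i, C (a i) * X ^ (i : ℕ))
    (hg : g = X ^ n + ∑ k, C (b k) * X ^ (k : ℕ)) :
    g.comp f = Matrix.charpoly (Matrix.of fun ip jq : Fin m × Fin n =>
      if (jq.1 : ℕ) = m - 1 then
        -(a ip.1) * (if ip.2 = jq.2 then 1 else 0)
          + (if (ip.1 : ℕ) = 0 then companion n b ip.2 jq.2 else 0)
      else if (ip.1 : ℕ) = (jq.1 : ℕ) + 1 then (if ip.2 = jq.2 then (1 : ℂ) else 0)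
      else 0) := by
  set A : Fin m → Matrix (Fin n) (Fin n) ℂ := fun i =>
    a i • 1 - if (i : ℕ) = 0 then companion n b else 0
  have hP : (X : ℂ[X]) ^ m • 1 + ∑ i : Fin m, (X : ℂ[X]) ^ (i : ℕ) • (A i).map C =
      (compRingHom f).mapMatrix (charmatrix (companion n b)) := by
    refine Matrix.ext fun p q => ?_
    obtain ⟨k, rfl⟩ := Nat.exists_eq_add_one_of_ne_zero hm.ne'
    simp only [Fin.val_eq_zero_iff, Fin.sum_univ_succ, Fin.coe_ofNat_eq_mod, Nat.zero_mod, pow_zero,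
      ↓reduceIte, one_smul, Fin.val_succ, Fin.succ_ne_zero, sub_zero, Matrix.add_apply,
      Matrix.smul_apply, one_apply, smul_eq_mul, mul_ite, mul_one, mul_zero, map_apply,
      Matrix.sub_apply, map_sub, Matrix.sum_apply, X_pow_mul_C, hf, RingHom.mapMatrix_apply,
      coe_compRingHom, charmatrix_apply, diagonal_apply, sub_comp, C_comp, A]
    split_ifs <;> simp
    ring
  calc g.comp f = compRingHom f (companion n b).charpoly := by rw [charpoly_companion, hg]; rfl
    _ = (blockCompanion A).charpoly := by rw [charpoly_blockCompanion, hP, charpoly, RingHom.map_det]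
    _ = _ := by
      congr 1
      ext ⟨i, p⟩ ⟨j, q⟩
      simp only [A, blockCompanion, of_apply, Matrix.sub_apply, Matrix.smul_apply, one_apply]
      split_ifs <;> simp [neg_add_eq_sub]

theorem statement2 (m n : ℕ) (hm : 0 < m) (hn : 0 < n) (a : Fin m → ℂ) (b : Fin n → ℂ)
    (f g : ℂ[X])
    (hf : f = X ^ m + ∑ i, C (a i) * X ^ (i : ℕ))
    (hg : g = X ^ n + ∑ k, C (b k) * X ^ (k : ℕ)) :
    g.comp f = Matrix.charpoly (Matrix.of fun ip jq : Fin m × Fin n =>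
      if (jq.1 : ℕ) = m - 1 then
        -(a ip.1) * (if ip.2 = jq.2 then 1 else 0)
          + (if (ip.1 : ℕ) = 0 then companion n b ip.2 jq.2 else 0)
      else if (ip.1 : ℕ) = (jq.1 : ℕ) + 1 then (if ip.2 = jq.2 then (1 : ℂ) else 0)
      else 0) :=
  statement2_general m n hm a b f g hf hg
end

section
/- For every positive integer n and complex numbers x, y, z, the product p_n(z; x, y) = ∏_{r,s=1}^{n} (z^{1/n} + ε^r x^{1/n} + ε^s y^{1/n}), where ε is a primitive n-th root of unity and fixed n-th roots are chosen, is a polynomial in x, y, z that is symmetric in the three variables x, y, z. -/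
/-!
Write `a, b, c` for the chosen `n`-th roots of `x, y, z`. Up to indexing the roots of unity,
the product is `Q(a, b, c)` with `Q = ∏_{ζ, ω ∈ μₙ} (ζ X₀ + ω X₁ + X₂)`. Reindexing over `μₙ`
shows that `Q` is unchanged by `X₀ ↦ ζ X₀` and by `X₁ ↦ ζ X₁` for `ζ ∈ μₙ`, and by every
permutation of the variables (to swap `X₁` and `X₂`, pull `ω` out of each linear form).
The first two invariances make the exponents of `X₀` and `X₁` in every monomial of `Q`
multiples of `n`, and then so is the exponent of `X₂` since `Q` is homogeneous of degree `n²`.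
Hence `Q = P(X₀ⁿ, X₁ⁿ, X₂ⁿ)`; evaluating at `(a, b, c)` gives `P(x, y, z)`, and `P` is symmetric
because `Q` is and expansion `Xᵢ ↦ Xᵢⁿ` is injective.
-/

noncomputable def pn (n : ℕ) (z x y : ℂ) : ℂ :=
  ∏ r : Fin n, ∏ s : Fin n,
    (z ^ (n : ℂ)⁻¹
      + Complex.exp (2 * Real.pi * Complex.I * ((r : ℕ) + 1) / n) * x ^ (n : ℂ)⁻¹
      + Complex.exp (2 * Real.pi * Complex.I * ((s : ℕ) + 1) / n) * y ^ (n : ℂ)⁻¹)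

open Finset MvPolynomial
open Polynomial (nthRootsFinset)

namespace Polynomial

variable {K M : Type*} [Field K] [CommMonoid M] {n : ℕ}

theorem pow_eq_of_mem_nthRootsFinset {R : Type*} [CommRing R] [IsDomain R] {a η : R}
    (hη : η ∈ nthRootsFinset n a) : η ^ n = a := by
  obtain _ | n := n
  · simp at hη
  exact (mem_nthRootsFinset n.succ_pos a).1 hη

theorem inv_mem_nthRootsFinset {η : K} (hη : η ∈ nthRootsFinset n (1 : K)) :
    η⁻¹ ∈ nthRootsFinset n (1 : K) := by
  obtain _ | n := n
  · simp at hη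
  rw [mem_nthRootsFinset n.succ_pos, inv_pow, pow_eq_of_mem_nthRootsFinset hη, inv_one]

theorem prod_nthRootsFinset_inv (f : K → M) :
    ∏ z ∈ nthRootsFinset n (1 : K), f z⁻¹ = ∏ z ∈ nthRootsFinset n (1 : K), f z :=
  prod_nbij' (·⁻¹) (·⁻¹) (fun _ => inv_mem_nthRootsFinset) (fun _ => inv_mem_nthRootsFinset)
    (fun _ _ => inv_inv _) (fun _ _ => inv_inv _) (fun _ _ => rfl)

theorem prod_nthRootsFinset_mul_left {η : K} (hη : η ∈ nthRootsFinset n (1 : K)) (f : K → M) :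
    ∏ z ∈ nthRootsFinset n (1 : K), f (η * z) = ∏ z ∈ nthRootsFinset n (1 : K), f z := by
  have hη0 : η ≠ 0 := ne_zero_of_mem_nthRootsFinset one_ne_zero hη
  refine prod_nbij' (η * ·) (η⁻¹ * ·) (fun z hz => ?_) (fun z hz => ?_)
    (fun z _ => inv_mul_cancel_left₀ hη0 z) (fun z _ => mul_inv_cancel_left₀ hη0 z)
    (fun _ _ => rfl)
  · simpa using mul_mem_nthRootsFinset hη hz
  · simpa using mul_mem_nthRootsFinset (inv_mem_nthRootsFinset hη) hz

end Polynomial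

namespace IsPrimitiveRoot

variable {K M : Type*} [Field K] [CommMonoid M] {n : ℕ}

theorem prod_nthRootsFinset {ζ : K} (hζ : IsPrimitiveRoot ζ n) (f : K → M) :
    ∏ z ∈ nthRootsFinset n (1 : K), f z = ∏ i ∈ range n, f (ζ ^ i) := by
  symm
  refine prod_nbij (ζ ^ ·) (fun i hi => ?_) (fun i hi j hj => hζ.pow_inj (mem_range.1 hi)
    (mem_range.1 hj)) (fun z hz => ?_) (fun _ _ => rfl)
  · rw [Polynomial.mem_nthRootsFinset (Nat.zero_lt_of_lt (mem_range.1 hi)), ← pow_mul, mul_comm,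
      pow_mul, hζ.pow_eq_one, one_pow]
  · obtain _ | n := n
    · simp at hz
    obtain ⟨i, hi, rfl⟩ :=
      hζ.eq_pow_of_pow_eq_one ((Polynomial.mem_nthRootsFinset n.succ_pos 1).1 hz)
    exact ⟨i, by simpa using hi, rfl⟩

theorem prod_fin_pow_succ {ζ : K} (hζ : IsPrimitiveRoot ζ n) (f : K → M) :
    ∏ r : Fin n, f (ζ ^ ((r : ℕ) + 1)) = ∏ z ∈ nthRootsFinset n (1 : K), f z := by
  obtain rfl | hn := n.eq_zero_or_pos
  · simp
  simp_rw [Fin.prod_univ_eq_prod_range (fun r => f (ζ ^ (r + 1))), pow_succ',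
    ← hζ.prod_nthRootsFinset (fun z => f (ζ * z))]
  exact Polynomial.prod_nthRootsFinset_mul_left (hζ.mem_nthRootsFinset hn) f

end IsPrimitiveRoot

section RootProd

variable (K : Type*) [Field K] {A B : Type*} [CommRing A] [Algebra K A] [CommRing B] [Algebra K B]
  {n : ℕ}

noncomputable def rootProd (n : ℕ) (a b c : A) : A :=
  ∏ ζ ∈ nthRootsFinset n (1 : K), ∏ ω ∈ nthRootsFinset n (1 : K), (ζ • a + ω • b + c)

variable {K}

theorem map_rootProd (f : A →ₐ[K] B) (a b c : A) :
    f (rootProd K n a b c) = rootProd K n (f a) (f b) (f c) := by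
  simp only [rootProd, map_prod, map_add, map_smul]

theorem rootProd_smul_left {η : K} (hη : η ∈ nthRootsFinset n (1 : K)) (a b c : A) :
    rootProd K n (η • a) b c = rootProd K n a b c := by
  simp only [rootProd, smul_smul, mul_comm _ η]
  exact Polynomial.prod_nthRootsFinset_mul_left (M := A) hη
    (fun ζ => ∏ ω ∈ nthRootsFinset n (1 : K), (ζ • a + ω • b + c))

theorem rootProd_smul_mid {η : K} (hη : η ∈ nthRootsFinset n (1 : K)) (a b c : A) :
    rootProd K n a (η • b) c = rootProd K n a b c := by
  simp only [rootProd, smul_smul, mul_comm _ η]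
  exact prod_congr rfl fun ζ _ =>
    Polynomial.prod_nthRootsFinset_mul_left (M := A) hη (fun ω => ζ • a + ω • b + c)

theorem rootProd_comm_left (a b c : A) : rootProd K n a b c = rootProd K n b a c := by
  rw [rootProd, rootProd, prod_comm]
  simp only [add_comm (_ • a)]

theorem rootProd_comm_right {η : K} (hη : IsPrimitiveRoot η n) (a b c : A) :
    rootProd K n a b c = rootProd K n a c b := by
  have factor (ω : K) (hω : ω ∈ nthRootsFinset n (1 : K)) (ζ : K) :
      ζ • a + ω • c + b = ω • ((ω⁻¹ * ζ) • a + ω⁻¹ • b + c) := by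
    have hω0 : ω ≠ 0 := Polynomial.ne_zero_of_mem_nthRootsFinset one_ne_zero hω
    simp only [smul_add, smul_smul, mul_inv_cancel_left₀ hω0, mul_inv_cancel₀ hω0, one_smul]
    abel
  symm
  calc rootProd K n a c b
      = ∏ ω ∈ nthRootsFinset n (1 : K), ∏ ζ ∈ nthRootsFinset n (1 : K),
          ω • ((ω⁻¹ * ζ) • a + ω⁻¹ • b + c) := by
        rw [rootProd, prod_comm]
        exact prod_congr rfl fun ω hω => prod_congr rfl fun ζ _ => factor ω hω ζ
    _ = ∏ ω ∈ nthRootsFinset n (1 : K), ∏ ζ ∈ nthRootsFinset n (1 : K),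
          (ζ • a + ω⁻¹ • b + c) := by
        refine prod_congr rfl fun ω hω => ?_
        rw [← smul_prod, hη.card_nthRootsFinset,
          Polynomial.pow_eq_of_mem_nthRootsFinset hω, one_smul]
        exact Polynomial.prod_nthRootsFinset_mul_left (M := A)
          (Polynomial.inv_mem_nthRootsFinset hω) (fun ζ => ζ • a + ω⁻¹ • b + c)
    _ = rootProd K n a b c := by
        rw [Polynomial.prod_nthRootsFinset_inv (M := A)
          (fun ω => ∏ ζ ∈ nthRootsFinset n (1 : K), (ζ • a + ω • b + c)), rootProd, prod_comm]

theorem rootProd_perm {η : K} (hη : IsPrimitiveRoot η n) (σ : Equiv.Perm (Fin 3))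
    (u : Fin 3 → A) :
    rootProd K n (u (σ 0)) (u (σ 1)) (u (σ 2)) = rootProd K n (u 0) (u 1) (u 2) := by
  have hσ : σ ∈ Submonoid.closure (Set.range fun i : Fin 2 => Equiv.swap i.castSucc i.succ) := by
    rw [Equiv.Perm.mclosure_swap_castSucc_succ]; trivial
  induction hσ using Submonoid.closure_induction generalizing u with
  | mem σ hσ =>
    obtain ⟨i, rfl⟩ := hσ
    fin_cases i
    · exact (rootProd_comm_left _ _ _).symm
    · exact (rootProd_comm_right hη _ _ _).symm
  | one => rfl
  | mul σ τ _ _ hσ hτ => exact (hτ (u ∘ σ)).trans (hσ u)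

end RootProd

namespace MvPolynomial

variable {σ R : Type*} [CommSemiring R]

theorem coeff_aeval_smul_X (c : σ → R) (p : MvPolynomial σ R) (d : σ →₀ ℕ) :
    coeff d (aeval (fun i => c i • X i) p) = (d.prod fun i k => c i ^ k) * coeff d p := by
  induction p using MvPolynomial.induction_on' with
  | monomial e a =>
    have : aeval (fun i => c i • X i) (monomial e a) =
        monomial e ((e.prod fun i k => c i ^ k) * a) := by
      rw [aeval_monomial, monomial_eq, C_mul, algebraMap_eq, map_finsuppProd]
      simp only [smul_eq_C_mul, mul_pow, Finsupp.prod_mul, C_pow]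
      ring
    classical
    rw [this, coeff_monomial, coeff_monomial]
    split_ifs with h <;> simp [h]
  | add p q hp hq => simp only [map_add, coeff_add, hp, hq, mul_add]

theorem exists_expand_eq_of_dvd {n : ℕ} (p : MvPolynomial σ R)
    (h : ∀ d ∈ p.support, ∀ i, n ∣ d i) : ∃ q, expand n q = p := by
  refine ⟨∑ d ∈ p.support,
    monomial (Finsupp.mapRange (· / n) (Nat.zero_div n) d) (coeff d p), ?_⟩
  conv_rhs => rw [p.as_sum]
  refine (map_sum _ _ _).trans (sum_congr rfl fun d hd => ?_)
  rw [expand_monomial]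
  congr 2
  ext i
  simp [Nat.mul_div_cancel' (h d hd i)]

end MvPolynomial

section RootProdPolynomial

variable {K : Type*} [Field K] {n : ℕ} {η : K}

theorem isSymmetric_rootProd_X (hη : IsPrimitiveRoot η n) :
    (rootProd K n (X 0) (X 1) (X 2) : MvPolynomial (Fin 3) K).IsSymmetric := fun σ => by
  rw [map_rootProd (rename σ), rename_X, rename_X, rename_X]
  exact rootProd_perm hη σ X

theorem isHomogeneous_rootProd_X (hη : IsPrimitiveRoot η n) :
    (rootProd K n (X 0) (X 1) (X 2) : MvPolynomial (Fin 3) K).IsHomogeneous (n * n) := by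
  have linear (ζ ω : K) : (ζ • X 0 + ω • X 1 + X 2 : MvPolynomial (Fin 3) K).IsHomogeneous 1 := by
    simp only [smul_eq_C_mul]
    exact ((isHomogeneous_C_mul_X ζ 0).add (isHomogeneous_C_mul_X ω 1)).add (isHomogeneous_X K 2)
  simpa [rootProd, hη.card_nthRootsFinset] using
    IsHomogeneous.prod (nthRootsFinset n 1) _ _ fun ζ _ =>
      IsHomogeneous.prod (nthRootsFinset n 1) _ _ fun ω _ => linear ζ ω

theorem dvd_of_mem_support_rootProd_X (hη : IsPrimitiveRoot η n) (hn : 0 < n)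
    {d : Fin 3 →₀ ℕ}
    (hd : d ∈ (rootProd K n (X 0) (X 1) (X 2) : MvPolynomial (Fin 3) K).support)
    (i : Fin 3) : n ∣ d i := by
  set Q : MvPolynomial (Fin 3) K := rootProd K n (X 0) (X 1) (X 2)
  have scaled (c : Fin 3 → K) (hc : aeval (fun i => c i • X i) Q = Q) :
      c 0 ^ d 0 * c 1 ^ d 1 * c 2 ^ d 2 = 1 := by
    have h := coeff_aeval_smul_X c Q d
    rw [hc, Finsupp.prod_fintype _ _ (by simp), Fin.prod_univ_three] at h
    exact mul_right_cancel₀ (mem_support_iff.1 hd) (h.symm.trans (one_mul _).symm)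
  have hη_mem := hη.mem_nthRootsFinset hn
  have h0 : n ∣ d 0 := (hη.pow_eq_one_iff_dvd _).1 <| by
    simpa using scaled ![η, 1, 1] (by simp [Q, map_rootProd, rootProd_smul_left hη_mem])
  have h1 : n ∣ d 1 := (hη.pow_eq_one_iff_dvd _).1 <| by
    simpa using scaled ![1, η, 1] (by simp [Q, map_rootProd, rootProd_smul_mid hη_mem])
  have hsum : d 0 + d 1 + d 2 = n * n := by
    rw [← Fin.sum_univ_three, ← Finsupp.degree_eq_sum, Finsupp.degree_eq_weight_one]
    exact (isHomogeneous_rootProd_X hη) (mem_support_iff.1 hd)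
  have h2 : n ∣ d 2 := (Nat.dvd_add_right (dvd_add h0 h1)).1 (hsum ▸ dvd_mul_left n n)
  fin_cases i <;> assumption

end RootProdPolynomial

theorem MvPolynomial.eval_eq_eval_expand_cpow_inv {σ : Type*} {n : ℕ} (hn : n ≠ 0) (v : σ → ℂ)
    (p : MvPolynomial σ ℂ) : eval v p = eval (fun i => v i ^ (n : ℂ)⁻¹) (expand n p) := by
  rw [eval_expand]
  congr
  ext i
  exact (Complex.cpow_nat_inv_pow _ hn).symm

theorem pn_eq_rootProd {n : ℕ} (hn : 0 < n) (x y z : ℂ) :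
    pn n z x y = rootProd ℂ n (x ^ (n : ℂ)⁻¹) (y ^ (n : ℂ)⁻¹) (z ^ (n : ℂ)⁻¹) := by
  have hε := Complex.isPrimitiveRoot_exp n hn.ne'
  have hexp (m : ℕ) : Complex.exp (2 * Real.pi * Complex.I * ((m : ℂ) + 1) / n) =
      Complex.exp (2 * Real.pi * Complex.I / n) ^ (m + 1) := by
    rw [← Complex.exp_nat_mul]
    push_cast
    ring_nf
  simp only [pn, hexp, rootProd, smul_eq_mul]
  rw [← hε.prod_fin_pow_succ]
  refine prod_congr rfl fun r _ => ?_
  rw [← hε.prod_fin_pow_succ]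
  refine prod_congr rfl fun s _ => ?_
  ring

theorem statement4 (n : ℕ) (hn : 0 < n) :
    ∃ P : MvPolynomial (Fin 3) ℂ,
      (∀ x y z : ℂ, MvPolynomial.eval ![x, y, z] P = pn n z x y) ∧
      MvPolynomial.IsSymmetric P := by
  have hε := Complex.isPrimitiveRoot_exp n hn.ne'
  obtain ⟨P, hP⟩ := exists_expand_eq_of_dvd (rootProd ℂ n (X 0) (X 1) (X 2))
    fun d hd => dvd_of_mem_support_rootProd_X hε hn hd
  refine ⟨P, fun x y z => ?_, fun σ => expand_injective hn ?_⟩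
  · rw [eval_eq_eval_expand_cpow_inv hn.ne', hP, ← coe_aeval_eq_eval, AlgHom.coe_toRingHom,
      map_rootProd, pn_eq_rootProd hn]
    simp
  · rw [← rename_expand, hP]
    exact isSymmetric_rootProd_X hε σ
end

section
/- For every positive integer n and complex x, y, z with z = wⁿ, one has p_n(wⁿ; x, y) = χ(F_x ⊞ F_y; w), where F_x and F_y are the Frobenius companion matrices of the polynomials tⁿ − x and tⁿ − y respectively, χ(M; w) = det(wI − M) is the characteristic polynomial, and ⊞ denotes the Kronecker sum. -/
/-!
Over `ℂ`, the transposed companion matrix of `tⁿ - aⁿ` is similar to an upper-triangular matrix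
with diagonal `ζ^(r+1) a` (`ζ` a primitive `n`-th root of unity): for `a ≠ 0` the columns of the
transposed Vandermonde matrix of these roots are eigenvectors, and for `a = 0` the matrix is
already triangular. Conjugating a Kronecker sum by `P ⊗ Q` conjugates both summands, and a
Kronecker sum of upper-triangular matrices is upper triangular for the lexicographic order, with
diagonal entries `λᵢ + μⱼ`. Hence `χ(F_x ⊞ F_y; w) = ∏ (w + ζ^(r+1) x^(1/n) + ζ^(s+1) y^(1/n))`.
This is `p_n(wⁿ; x, y)` because the principal root `(wⁿ)^(1/n)` is `ζᵏ w` for some `k`, and the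
product over `r, s` is invariant under `w ↦ ζ w`.
-/

open Polynomial Matrix Kronecker

/-- The Frobenius companion matrix `F(0, …, 0, (-1)^(n+1) * x)` of the polynomial
`t ^ n - c` (subdiagonal `1`s, last column `(c, 0, …, 0)ᵀ`); its characteristic
polynomial is `t ^ n - c`. -/
def compC (n : ℕ) (c : ℂ) : Matrix (Fin n) (Fin n) ℂ :=
  Matrix.of fun i j =>
    if (i : ℕ) = 0 ∧ (j : ℕ) = n - 1 then c else if (i : ℕ) = (j : ℕ) + 1 then 1 else 0

namespace Matrix

section Semiring

variable {ι κ R : Type*} [DecidableEq ι] [DecidableEq κ] [Semiring R]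

def kroneckerSum (A : Matrix ι ι R) (B : Matrix κ κ R) : Matrix (ι × κ) (ι × κ) R :=
  A ⊗ₖ 1 + 1 ⊗ₖ B

theorem kroneckerSum_transpose (A : Matrix ι ι R) (B : Matrix κ κ R) :
    (kroneckerSum A B)ᵀ = kroneckerSum Aᵀ Bᵀ := by
  simp only [kroneckerSum, transpose_add, ← kroneckerMap_transpose, transpose_one]

theorem IsUpperTriangular.kroneckerSum [LinearOrder ι] [LinearOrder κ] {A : Matrix ι ι R}
    {B : Matrix κ κ R} (hA : A.IsUpperTriangular) (hB : B.IsUpperTriangular) :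
    (kroneckerSum A B).BlockTriangular toLex := by
  rintro ⟨i, k⟩ ⟨j, l⟩ hlt
  rcases Prod.Lex.toLex_lt_toLex.mp hlt with hji | ⟨rfl, hlk⟩
  · simp [Matrix.kroneckerSum, hA hji, hji.ne']
  · simp [Matrix.kroneckerSum, hB hlk, hlk.ne']

end Semiring

variable {ι κ R : Type*} [Fintype ι] [Fintype κ] [DecidableEq ι] [DecidableEq κ] [CommRing R]

theorem kroneckerSum_mul_kronecker {A T P : Matrix ι ι R} {B S Q : Matrix κ κ R}
    (hA : A * P = P * T) (hB : B * Q = Q * S) :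
    kroneckerSum A B * (P ⊗ₖ Q) = (P ⊗ₖ Q) * kroneckerSum T S := by
  simp only [kroneckerSum, add_mul, mul_add, ← mul_kronecker_mul, one_mul, mul_one, hA, hB]

theorem charpoly_eq_of_mul_eq_mul {M N U : Matrix ι ι R} (hU : IsUnit U) (h : M * U = U * N) :
    M.charpoly = N.charpoly := by
  rw [← charpoly_units_conj' hU.unit M, IsUnit.unit_spec, Matrix.mul_assoc, h, ← Matrix.mul_assoc,
    nonsing_inv_mul _ ((isUnit_iff_isUnit_det U).mp hU), Matrix.one_mul]

theorem charpoly_kroneckerSum_eq {A T P : Matrix ι ι R} {B S Q : Matrix κ κ R}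
    (hP : IsUnit P) (hQ : IsUnit Q) (hA : A * P = P * T) (hB : B * Q = Q * S) :
    (kroneckerSum A B).charpoly = (kroneckerSum T S).charpoly := by
  refine charpoly_eq_of_mul_eq_mul ?_ (kroneckerSum_mul_kronecker hA hB)
  rw [isUnit_iff_isUnit_det, det_kronecker] at *
  exact (hP.pow _).mul (hQ.pow _)

theorem charpoly_kroneckerSum_of_isUpperTriangular [LinearOrder ι] [LinearOrder κ]
    {A : Matrix ι ι R} {B : Matrix κ κ R} (hA : A.IsUpperTriangular) (hB : B.IsUpperTriangular) :
    (kroneckerSum A B).charpoly = ∏ i, ∏ j, (X - C (A i i + B j j)) := by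
  rw [← charpoly_reindex toLex, charpoly_of_isUpperTriangular]
  · refine (Fintype.prod_equiv toLex.symm _ (fun p : ι × κ => X - C (A p.1 p.1 + B p.2 p.2))
      fun p => ?_).trans (Fintype.prod_prod_type _)
    simp [kroneckerSum]
  · exact blockTriangular_reindex_iff.mpr (hA.kroneckerSum hB)

end Matrix

theorem prod_fin_pow_succ_of_pow_eq_one {K M : Type*} [Monoid K] [CommMonoid M] {n : ℕ} {ζ : K}
    (hζ : ζ ^ n = 1) (f : K → M) :
    ∏ r : Fin n, f (ζ ^ ((r : ℕ) + 1)) = ∏ r : Fin n, f (ζ ^ (r : ℕ)) := by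
  cases n with
  | zero => simp
  | succ m =>
    refine Fintype.prod_equiv (finRotate (m + 1)) _ _ fun r => ?_
    rw [coe_finRotate]
    split_ifs with h
    · simp [h, hζ]
    · rfl

theorem prod_prod_mul_left_add_pow_mul {K : Type*} [CommRing K] {n : ℕ} {ζ : K}
    (hζ : ζ ^ n = 1) (a b t : K) :
    ∏ r : Fin n, ∏ s : Fin n, (ζ * t + ζ ^ ((r : ℕ) + 1) * a + ζ ^ ((s : ℕ) + 1) * b)
      = ∏ r : Fin n, ∏ s : Fin n, (t + ζ ^ ((r : ℕ) + 1) * a + ζ ^ ((s : ℕ) + 1) * b) := by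
  have hfactor : ∀ r s : ℕ, ζ * t + ζ ^ (r + 1) * a + ζ ^ (s + 1) * b
      = ζ * (t + ζ ^ r * a + ζ ^ s * b) := fun r s => by ring
  simp only [hfactor, Finset.prod_mul_distrib, Finset.prod_const, Finset.card_univ,
    Fintype.card_fin, hζ, one_mul]
  rw [← prod_fin_pow_succ_of_pow_eq_one hζ fun z => ∏ s : Fin n, (t + z * a + ζ ^ (s : ℕ) * b)]
  exact Finset.prod_congr rfl fun r _ =>
    (prod_fin_pow_succ_of_pow_eq_one hζ fun z => t + ζ ^ ((r : ℕ) + 1) * a + z * b).symm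

namespace IsPrimitiveRoot

variable {K : Type*} [Field K] {n : ℕ} {ζ : K}

theorem exists_eq_pow_mul_of_pow_eq_pow (hζ : IsPrimitiveRoot ζ n) (hn : 0 < n) {u w : K}
    (h : u ^ n = w ^ n) : ∃ k : ℕ, u = ζ ^ k * w := by
  rcases eq_or_ne w 0 with rfl | hw
  · exact ⟨0, by simpa [hn.ne'] using h⟩
  · have : NeZero n := ⟨hn.ne'⟩
    obtain ⟨k, -, hk⟩ := hζ.eq_pow_of_pow_eq_one (ξ := u / w)
      (by rw [div_pow, h, div_self (pow_ne_zero n hw)])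
    exact ⟨k, by rw [hk, div_mul_cancel₀ u hw]⟩

theorem prod_prod_add_pow_mul_eq_of_pow_eq_pow (hζ : IsPrimitiveRoot ζ n) (hn : 0 < n)
    {u w : K} (h : u ^ n = w ^ n) (a b : K) :
    ∏ r : Fin n, ∏ s : Fin n, (u + ζ ^ ((r : ℕ) + 1) * a + ζ ^ ((s : ℕ) + 1) * b)
      = ∏ r : Fin n, ∏ s : Fin n, (w + ζ ^ ((r : ℕ) + 1) * a + ζ ^ ((s : ℕ) + 1) * b) := by
  obtain ⟨k, rfl⟩ := hζ.exists_eq_pow_mul_of_pow_eq_pow hn h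
  clear h
  induction k with
  | zero => simp
  | succ k ih => rw [pow_succ', mul_assoc, prod_prod_mul_left_add_pow_mul hζ.pow_eq_one, ih]

theorem pow_succ_mul_injective (hζ : IsPrimitiveRoot ζ n) (hn : 0 < n) {a : K} (ha : a ≠ 0) :
    Function.Injective fun r : Fin n => ζ ^ ((r : ℕ) + 1) * a := by
  intro r s hrs
  simp only [pow_succ, mul_left_inj' ha, mul_left_inj' (hζ.ne_zero hn.ne')] at hrs
  exact Fin.ext (hζ.pow_inj r.2 s.2 hrs)

end IsPrimitiveRoot

theorem compC_transpose_mul_vandermonde_transpose {n : ℕ} {c : ℂ} {d : Fin n → ℂ}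
    (hd : ∀ r, d r ^ n = c) :
    (compC n c)ᵀ * (vandermonde d)ᵀ = (vandermonde d)ᵀ * diagonal d := by
  ext i r
  rw [mul_diagonal, mul_apply, transpose_apply, vandermonde_apply, ← pow_succ]
  simp only [transpose_apply, vandermonde_apply, compC, of_apply]
  by_cases hi : (i : ℕ) = n - 1
  · rw [Finset.sum_eq_single ⟨0, by omega⟩]
    · simp [hi, ← hd r, Nat.sub_add_cancel (by omega : 1 ≤ n)]
    · intro k _ hk
      have : (k : ℕ) ≠ 0 := fun h => hk (Fin.ext h)
      simp [this]
      omega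
    · simp
  · rw [Finset.sum_eq_single ⟨i + 1, by omega⟩]
    · simp [hi]
    · intro k _ hk
      have : (k : ℕ) ≠ i + 1 := fun h => hk (Fin.ext h)
      simp [this, hi]
    · simp

theorem compC_zero_transpose_isUpperTriangular (n : ℕ) : (compC n 0)ᵀ.IsUpperTriangular := by
  intro i j hji
  have : (j : ℕ) ≠ i + 1 := by
    have : j < i := hji
    omega
  simp [compC, this]

theorem exists_compC_transpose_mul_eq_mul_isUpperTriangular {n : ℕ} (hn : 0 < n) {ζ : ℂ}
    (hζ : IsPrimitiveRoot ζ n) (a : ℂ) :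
    ∃ P T : Matrix (Fin n) (Fin n) ℂ, IsUnit P ∧ T.IsUpperTriangular ∧
      (∀ i, T i i = ζ ^ ((i : ℕ) + 1) * a) ∧ (compC n (a ^ n))ᵀ * P = P * T := by
  rcases eq_or_ne a 0 with rfl | ha
  · refine ⟨1, (compC n 0)ᵀ, isUnit_one, compC_zero_transpose_isUpperTriangular n,
      fun i => by simp [compC], ?_⟩
    rw [zero_pow hn.ne', Matrix.mul_one, Matrix.one_mul]
  · refine ⟨(vandermonde fun r => ζ ^ ((r : ℕ) + 1) * a)ᵀ, diagonal fun r => ζ ^ ((r : ℕ) + 1) * a,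
      ?_, blockTriangular_diagonal _, fun i => diagonal_apply_eq _ i,
      compC_transpose_mul_vandermonde_transpose fun r => ?_⟩
    · rw [isUnit_iff_isUnit_det, det_transpose, isUnit_iff_ne_zero]
      exact det_vandermonde_ne_zero_iff.mpr (hζ.pow_succ_mul_injective hn ha)
    · rw [mul_pow, pow_right_comm, hζ.pow_eq_one, one_pow, one_mul]

theorem pn_eq_prod (n : ℕ) (z x y : ℂ) :
    pn n z x y = ∏ r : Fin n, ∏ s : Fin n,
      (z ^ (n : ℂ)⁻¹ + Complex.exp (2 * Real.pi * Complex.I / n) ^ ((r : ℕ) + 1) * x ^ (n : ℂ)⁻¹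
        + Complex.exp (2 * Real.pi * Complex.I / n) ^ ((s : ℕ) + 1) * y ^ (n : ℂ)⁻¹) := by
  have hexp : ∀ m : ℕ, Complex.exp (2 * Real.pi * Complex.I * ((m : ℂ) + 1) / n)
      = Complex.exp (2 * Real.pi * Complex.I / n) ^ (m + 1) := fun m => by
    rw [← Complex.exp_nat_mul]
    push_cast
    ring_nf
  simp only [pn, hexp]

theorem statement5 (n : ℕ) (hn : 0 < n) (x y w : ℂ) :
    pn n (w ^ n) x y
      = ((compC n ((-1) ^ n * x) ⊗ₖ (1 : Matrix (Fin n) (Fin n) ℂ)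
          + (1 : Matrix (Fin n) (Fin n) ℂ) ⊗ₖ compC n ((-1) ^ n * y)).charpoly).eval w := by
  set ω := Complex.exp (2 * Real.pi * Complex.I / n)
  have hω : IsPrimitiveRoot ω n := Complex.isPrimitiveRoot_exp n hn.ne'
  have hroot : ∀ v : ℂ, (-v ^ (n : ℂ)⁻¹) ^ n = (-1) ^ n * v := fun v => by
    rw [neg_pow, Complex.cpow_nat_inv_pow v hn.ne']
  obtain ⟨P, T, hP, hT, hTdiag, hPT⟩ :=
    exists_compC_transpose_mul_eq_mul_isUpperTriangular hn hω (-x ^ (n : ℂ)⁻¹)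
  obtain ⟨Q, S, hQ, hS, hSdiag, hQS⟩ :=
    exists_compC_transpose_mul_eq_mul_isUpperTriangular hn hω (-y ^ (n : ℂ)⁻¹)
  rw [hroot] at hPT hQS
  calc pn n (w ^ n) x y
      = ∏ r : Fin n, ∏ s : Fin n, ((w ^ n) ^ (n : ℂ)⁻¹ + ω ^ ((r : ℕ) + 1) * x ^ (n : ℂ)⁻¹
          + ω ^ ((s : ℕ) + 1) * y ^ (n : ℂ)⁻¹) := pn_eq_prod n _ x y
    _ = ∏ r : Fin n, ∏ s : Fin n, (w + ω ^ ((r : ℕ) + 1) * x ^ (n : ℂ)⁻¹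
          + ω ^ ((s : ℕ) + 1) * y ^ (n : ℂ)⁻¹) :=
      hω.prod_prod_add_pow_mul_eq_of_pow_eq_pow hn (Complex.cpow_nat_inv_pow _ hn.ne') _ _
    _ = (kroneckerSum T S).charpoly.eval w := by
      simp only [charpoly_kroneckerSum_of_isUpperTriangular hT hS, eval_prod, eval_sub, eval_X,
        eval_C, hTdiag, hSdiag, sub_add_eq_sub_sub, mul_neg, sub_neg_eq_add]
    _ = _ := by
      rw [← charpoly_kroneckerSum_eq hP hQ hPT hQS, ← kroneckerSum_transpose, charpoly_transpose]
      rfl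
end

section
/- For every positive integer n, the polynomial p_n(z; x, y) = ∏_{r,s=1}^{n}(z^{1/n} + ε^r x^{1/n} + ε^s y^{1/n}) is a homogeneous polynomial of degree n in the variables x, y, z with integer coefficients. -/
/-!
Write `u, a, b` for the chosen `n`-th roots of `z, x, y`. As a polynomial in `u, a, b`,
`∏_{r,s} (u + εʳ a + εˢ b)` has coefficients that are symmetric polynomials in `ε, …, εⁿ`
(the product over pairs is invariant under permuting the roots), hence integral polynomials in
their elementary symmetric functions, which are the coefficients `0, ±1` of `Xⁿ - 1`. It is
homogeneous of degree `n²` and unchanged when any one of `u, a, b` is multiplied by `ε` (this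
permutes the factors, up to the factor `ε^{n²} = 1`), so every exponent is divisible by `n`;
substituting `z, x, y` for `uⁿ, aⁿ, bⁿ` gives the required polynomial of degree `n`.
-/

open MvPolynomial Finset

theorem Function.Periodic.prod_fin_comp_add_one {M : Type*} [CommMonoid M] {f : ℕ → M} {n : ℕ}
    (hf : Function.Periodic f n) : ∏ r : Fin n, f (r + 1) = ∏ r : Fin n, f r := by
  cases n with
  | zero => simp
  | succ m =>
    rw [Fin.prod_univ_castSucc, Fin.prod_univ_succ, mul_comm]
    simpa using congrArg (· * ∏ i : Fin m, f (i + 1)) (by simpa using hf 0)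

theorem prod_fin_pow_succ {M R : Type*} [CommMonoid M] [Monoid R] {ζ : R} {n : ℕ}
    (hζ : ζ ^ n = 1) (g : R → M) :
    ∏ r : Fin n, g (ζ ^ ((r : ℕ) + 1)) = ∏ r : Fin n, g (ζ ^ (r : ℕ)) :=
  Function.Periodic.prod_fin_comp_add_one (f := fun k => g (ζ ^ k)) fun k => by
    simp only [pow_add, hζ, mul_one]

theorem Finsupp.prod_mulSingle_pow {σ M : Type*} [CommMonoid M] [DecidableEq σ] (m : σ →₀ ℕ)
    (i : σ) (a : M) : (m.prod fun j k => (Pi.mulSingle i a : σ → M) j ^ k) = a ^ m i := by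
  refine (Finsupp.prod_eq_single i (fun j _ hj => ?_) fun _ => ?_).trans ?_
  · rw [Pi.mulSingle_eq_of_ne hj, one_pow]
  · exact pow_zero _
  · rw [Pi.mulSingle_eq_same]

theorem Polynomial.esymm_roots_map_mem_range {A K : Type*} [CommRing A] [CommRing K] [IsDomain K]
    (f : A →+* K) {p : Polynomial A} (hp : p.Monic)
    (hroots : Multiset.card (p.map f).roots = p.natDegree) (j : ℕ) :
    (p.map f).roots.esymm j ∈ f.range := by
  have hdeg : (p.map f).natDegree = p.natDegree := hp.natDegree_map f
  rcases le_or_gt j p.natDegree with hj | hj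
  · have hvieta := Polynomial.coeff_eq_esymm_roots_of_card (hroots.trans hdeg.symm)
      (k := p.natDegree - j) (by omega)
    rw [(hp.map f).leadingCoeff, hdeg, Nat.sub_sub_self hj, one_mul, Polynomial.coeff_map] at hvieta
    refine ⟨(-1) ^ j * p.coeff (p.natDegree - j), ?_⟩
    rw [map_mul, hvieta, map_pow, map_neg, map_one, ← mul_assoc, ← mul_pow]
    simp
  · rw [Multiset.esymm, Multiset.powersetCard_eq_empty _ (by omega)]
    simp

theorem IsPrimitiveRoot.esymm_pow_mem_range {K : Type*} [CommRing K] [IsDomain K] {ζ : K} {n : ℕ}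
    (hζ : IsPrimitiveRoot ζ n) (j : ℕ) :
    (univ.val.map fun r : Fin n => ζ ^ (r : ℕ)).esymm j ∈ (Int.castRingHom K).range := by
  have hroots : (univ.val.map fun r : Fin n => ζ ^ (r : ℕ)) = Polynomial.nthRoots n (1 : K) := by
    rw [hζ.nthRoots_eq (one_pow n)]
    simp only [mul_one, Fin.univ_val_map, Multiset.range, Multiset.map_coe, List.ofFn_eq_map,
      ← List.map_coe_finRange_eq_range, List.map_map]
    rfl
  rcases Nat.eq_zero_or_pos n with rfl | hn
  · rcases j with _ | j
    · exact ⟨1, by simp [Multiset.esymm, Multiset.powersetCard_zero_left]⟩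
    · exact ⟨0, by simp [Multiset.esymm, Multiset.powersetCard_zero_right]⟩
  have hmap : (Polynomial.X ^ n - Polynomial.C 1 : Polynomial ℤ).map (Int.castRingHom K) =
      Polynomial.X ^ n - Polynomial.C 1 := by
    simp
  have := Polynomial.esymm_roots_map_mem_range (Int.castRingHom K)
    (Polynomial.monic_X_pow_sub_C 1 hn.ne')
    (by rw [hmap, Polynomial.natDegree_X_pow_sub_C]; exact hζ.card_nthRoots_one) j
  rwa [hroots, Polynomial.nthRoots, ← hmap]

theorem MvPolynomial.IsSymmetric.eval₂_mem_range {σ R S : Type*} [Fintype σ] [CommRing R]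
    [CommRing S] (f : R →+* S) {p : MvPolynomial σ R} (hp : p.IsSymmetric) (t : σ → S)
    (ht : ∀ j, (univ.val.map t).esymm j ∈ f.range) : eval₂ f t p ∈ f.range := by
  obtain ⟨q, hq⟩ := esymmAlgHom_surjective R le_rfl ⟨p, hp⟩
  have hpq : p = aeval (fun i : Fin (Fintype.card σ) => esymm σ R (i + 1)) q := by
    rw [← esymmAlgHom_apply, hq]
  choose a ha using ht
  refine ⟨eval (fun i : Fin (Fintype.card σ) => a (i + 1)) q, ?_⟩
  rw [hpq, aeval_eq_bind₁, ← coe_eval₂Hom, eval₂Hom_bind₁, coe_eval₂Hom, eval, coe_eval₂Hom,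
    eval₂_comp_left]
  congr 1
  funext i
  simp_rw [Function.comp_apply, ha, coe_eval₂Hom, esymm, eval₂_sum, eval₂_prod, eval₂_X,
    esymm_map_val]

namespace MvPolynomial

variable {σ R : Type*}

theorem exists_expand_eq_of_forall_dvd [CommSemiring R] {n : ℕ} {Q : MvPolynomial σ R}
    (h : ∀ m ∈ Q.support, ∀ i, n ∣ m i) : ∃ P, expand n P = Q := by
  refine ⟨∑ m ∈ Q.support, monomial (m ⌊/⌋ n) (coeff m Q), ?_⟩
  conv_rhs => rw [← Q.support_sum_monomial_coeff]
  rw [map_sum]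
  refine sum_congr rfl fun m hm => ?_
  have hm' : n • (m ⌊/⌋ n) = m := Finsupp.ext fun i => by simp [Nat.mul_div_cancel' (h m hm i)]
  rw [expand_monomial, hm']

theorem IsHomogeneous.of_expand [CommSemiring R] {n d : ℕ} (hn : n ≠ 0) {P : MvPolynomial σ R}
    (h : (expand n P).IsHomogeneous (n * d)) : P.IsHomogeneous d := by
  intro m hm
  have := h (by rwa [coeff_expand_smul n hn])
  rw [map_nsmul, smul_eq_mul] at this
  exact Nat.eq_of_mul_eq_mul_left (Nat.pos_of_ne_zero hn) this

theorem coeff_aeval_C_mul_X [CommSemiring R] (c : σ → R) (F : MvPolynomial σ R) (m : σ →₀ ℕ) :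
    coeff m (aeval (fun i => C (c i) * X i) F) = (m.prod fun i k => c i ^ k) * coeff m F := by
  classical
  induction F using MvPolynomial.induction_on' with
  | monomial d a =>
    have : aeval (fun i => C (c i) * X i) (monomial d a) =
        monomial d ((d.prod fun i k => c i ^ k) * a) := by
      rw [aeval_monomial, monomial_eq, algebraMap_eq, C_mul, map_finsuppProd C]
      simp only [mul_pow, ← C_pow, Finsupp.prod_mul]
      ring
    rw [this, coeff_monomial, coeff_monomial]
    split_ifs with hdm <;> simp [hdm]
  | add p q hp hq => simp only [map_add, coeff_add, hp, hq, mul_add]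

theorem dvd_of_aeval_mulSingle_eq_self [CommRing R] [IsDomain R] [DecidableEq σ] {ζ : R} {n : ℕ}
    (hζ : IsPrimitiveRoot ζ n) {F : MvPolynomial σ R} (i : σ)
    (hF : aeval (fun j => C ((Pi.mulSingle i ζ : σ → R) j) * X j) F = F) {m : σ →₀ ℕ}
    (hm : m ∈ F.support) : n ∣ m i := by
  have hcoeff := coeff_aeval_C_mul_X (Pi.mulSingle i ζ : σ → R) F m
  rw [hF, Finsupp.prod_mulSingle_pow] at hcoeff
  rw [← hζ.pow_eq_one_iff_dvd]
  exact (mul_eq_right₀ (mem_support_iff.mp hm)).mp hcoeff.symm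

end MvPolynomial

section PairProd

variable {ι S : Type*} [Fintype ι]

def pairProd [CommSemiring S] (t : ι → S) (u a b : S) : S :=
  ∏ r, ∏ s, (u + t r * a + t s * b)

theorem map_pairProd [CommSemiring S] {S' F : Type*} [CommSemiring S'] [FunLike F S S']
    [RingHomClass F S S'] (f : F) (t : ι → S) (u a b : S) :
    f (pairProd t u a b) = pairProd (f ∘ t) (f u) (f a) (f b) := by
  simp [pairProd, map_prod]

theorem pairProd_comp_equiv [CommSemiring S] (t : ι → S) (e : ι ≃ ι) (u a b : S) :
    pairProd (t ∘ e) u a b = pairProd t u a b :=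
  Fintype.prod_equiv e _ _ fun _ => Fintype.prod_equiv e _ _ fun _ => rfl

variable [CommRing S] {T : S} {n : ℕ} (hT : T ^ n = 1) (u a b : S)
include hT

theorem pairProd_pow_succ :
    pairProd (fun r : Fin n => T ^ ((r : ℕ) + 1)) u a b
      = pairProd (fun r : Fin n => T ^ (r : ℕ)) u a b := by
  rw [pairProd, prod_fin_pow_succ hT fun c => ∏ s : Fin n, (u + c * a + T ^ ((s : ℕ) + 1) * b)]
  exact prod_congr rfl fun r _ => prod_fin_pow_succ hT fun c => u + T ^ (r : ℕ) * a + c * b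

theorem pairProd_pow_mul_fst :
    pairProd (fun r : Fin n => T ^ (r : ℕ)) (T * u) a b
      = pairProd (fun r : Fin n => T ^ (r : ℕ)) u a b := by
  calc ∏ r : Fin n, ∏ s : Fin n, (T * u + T ^ (r : ℕ) * a + T ^ (s : ℕ) * b)
      = pairProd (fun r : Fin n => T ^ ((r : ℕ) + 1)) (T * u) a b :=
        (pairProd_pow_succ hT _ _ _).symm
    _ = ∏ r : Fin n, ∏ s : Fin n, T * (u + T ^ (r : ℕ) * a + T ^ (s : ℕ) * b) := by
        simp only [pairProd, pow_succ]; ring_nf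
    _ = ∏ r : Fin n, ∏ s : Fin n, (u + T ^ (r : ℕ) * a + T ^ (s : ℕ) * b) := by
        simp only [prod_mul_distrib, prod_const, card_univ, Fintype.card_fin, hT, one_mul]

theorem pairProd_pow_mul_snd :
    pairProd (fun r : Fin n => T ^ (r : ℕ)) u (T * a) b
      = pairProd (fun r : Fin n => T ^ (r : ℕ)) u a b := by
  simp_rw [pairProd, ← mul_assoc, ← pow_succ]
  exact prod_fin_pow_succ hT fun c => ∏ s : Fin n, (u + c * a + T ^ (s : ℕ) * b)

theorem pairProd_pow_mul_thd :
    pairProd (fun r : Fin n => T ^ (r : ℕ)) u a (T * b)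
      = pairProd (fun r : Fin n => T ^ (r : ℕ)) u a b := by
  refine prod_congr rfl fun r _ => ?_
  simp_rw [← mul_assoc, ← pow_succ]
  exact prod_fin_pow_succ hT fun c => u + T ^ (r : ℕ) * a + c * b

end PairProd

section PnPoly

variable {ι R S : Type*} [Fintype ι]

-- `X 0, X 1, X 2` stand for the `n`-th roots of `x, y, z` (cf. `![x, y, z]` in `statement6`).
noncomputable def pnPoly [CommSemiring R] (t : ι → R) : MvPolynomial (Fin 3) R :=
  pairProd (fun r => C (t r)) (X 2) (X 0) (X 1)

theorem map_pnPoly [CommSemiring R] [CommSemiring S] (f : R →+* S) (t : ι → R) :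
    map f (pnPoly t) = pnPoly (f ∘ t) := by
  simp [pnPoly, map_pairProd, Function.comp_def]

theorem eval_pnPoly [CommSemiring R] (t : ι → R) (w : Fin 3 → R) :
    eval w (pnPoly t) = pairProd t (w 2) (w 0) (w 1) := by
  simp [pnPoly, map_pairProd, Function.comp_def]

theorem pnPoly_comp_equiv [CommSemiring R] (t : ι → R) (e : ι ≃ ι) : pnPoly (t ∘ e) = pnPoly t :=
  pairProd_comp_equiv (fun r => C (t r)) e (X 2) (X 0) (X 1)

theorem isHomogeneous_pnPoly [CommSemiring R] (t : ι → R) :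
    (pnPoly t).IsHomogeneous (Fintype.card ι * Fintype.card ι) := by
  have hlin : ∀ c d : R, (X 2 + C c * X 0 + C d * X 1 : MvPolynomial (Fin 3) R).IsHomogeneous 1 :=
    fun c d => ((isHomogeneous_X _ _).add (isHomogeneous_C_mul_X _ _)).add
      (isHomogeneous_C_mul_X _ _)
  have hrow : ∀ r, (∏ s, (X 2 + C (t r) * X 0 + C (t s) * X 1) : MvPolynomial (Fin 3) R)
      |>.IsHomogeneous (Fintype.card ι) := fun r => by
    simpa using IsHomogeneous.prod univ _ (fun _ => 1) fun s _ => hlin (t r) (t s)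
  rw [pnPoly, pairProd]
  simpa using IsHomogeneous.prod univ _ (fun _ => Fintype.card ι) fun r _ => hrow r

theorem isSymmetric_coeff_pnPoly_X [CommSemiring R] (m : Fin 3 →₀ ℕ) :
    (coeff m (pnPoly (X : ι → MvPolynomial ι R))).IsSymmetric := by
  intro e
  rw [← AlgHom.coe_toRingHom, ← coeff_map, map_pnPoly]
  simp only [Function.comp_def, RingHom.coe_coe, rename_X]
  exact congrArg (coeff m) (pnPoly_comp_equiv X e)

theorem pnPoly_mem_range_map [CommRing R] [CommRing S] (f : R →+* S) (t : ι → S)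
    (ht : ∀ j, (univ.val.map t).esymm j ∈ f.range) : pnPoly t ∈ Set.range (map f) := by
  have huniv : pnPoly t = map (eval₂Hom f t) (pnPoly (X : ι → MvPolynomial ι R)) := by
    rw [map_pnPoly]; congr; funext i; simp
  rw [mem_range_map_iff_coeffs_subset]
  intro c hc
  obtain ⟨m, -, rfl⟩ := mem_coeffs_iff.mp hc
  rw [huniv, coeff_map]
  exact (isSymmetric_coeff_pnPoly_X m).eval₂_mem_range f t ht

theorem aeval_mulSingle_pnPoly [CommRing R] {ζ : R} {n : ℕ} (hζ : ζ ^ n = 1) (i : Fin 3) :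
    aeval (fun j => C ((Pi.mulSingle i ζ : Fin 3 → R) j) * X j)
        (pnPoly fun r : Fin n => ζ ^ (r : ℕ))
      = pnPoly fun r : Fin n => ζ ^ (r : ℕ) := by
  have hC : (C ζ : MvPolynomial (Fin 3) R) ^ n = 1 := by rw [← C_pow, hζ, C_1]
  simp only [pnPoly, map_pairProd, Function.comp_def, map_pow, aeval_X, aeval_C,
    algebraMap_eq]
  fin_cases i <;> simp only [Fin.zero_eta, Fin.mk_one, Fin.reduceFinMk, Pi.mulSingle_eq_same,
    ne_eq, Fin.reduceEq, not_false_eq_true, Pi.mulSingle_eq_of_ne, C_1, one_mul]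
  · exact pairProd_pow_mul_snd hC _ _ _
  · exact pairProd_pow_mul_thd hC _ _ _
  · exact pairProd_pow_mul_fst hC _ _ _

end PnPoly

theorem pn_eq_eval_pnPoly {n : ℕ} (z x y : ℂ) :
    pn n z x y = eval ![x ^ (n : ℂ)⁻¹, y ^ (n : ℂ)⁻¹, z ^ (n : ℂ)⁻¹]
      (pnPoly fun r : Fin n => Complex.exp (2 * Real.pi * Complex.I / n) ^ (r : ℕ)) := by
  have hexp : ∀ k : ℕ, Complex.exp (2 * Real.pi * Complex.I * ((k : ℂ) + 1) / n)
      = Complex.exp (2 * Real.pi * Complex.I / n) ^ (k + 1) := fun k => by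
    rw [← Complex.exp_nat_mul]; congr 1; push_cast; ring
  have hroot : Complex.exp (2 * Real.pi * Complex.I / n) ^ n = 1 := by
    rcases eq_or_ne n 0 with rfl | hn
    exacts [pow_zero _, (Complex.isPrimitiveRoot_exp n hn).pow_eq_one]
  simp only [pn, hexp]
  rw [eval_pnPoly, ← pairProd_pow_succ hroot]
  rfl

theorem statement6 (n : ℕ) (hn : 0 < n) :
    ∃ P : MvPolynomial (Fin 3) ℤ,
      P.IsHomogeneous n ∧
      ∀ x y z : ℂ, MvPolynomial.eval₂ (Int.castRingHom ℂ) ![x, y, z] P = pn n z x y := by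
  set ε := Complex.exp (2 * Real.pi * Complex.I / n)
  have hε : IsPrimitiveRoot ε n := Complex.isPrimitiveRoot_exp n hn.ne'
  obtain ⟨Q, hQ⟩ := pnPoly_mem_range_map (Int.castRingHom ℂ) _ hε.esymm_pow_mem_range
  have hcast : Function.Injective (Int.castRingHom ℂ) := Int.cast_injective
  have hQhom : Q.IsHomogeneous (n * n) := by
    have := isHomogeneous_pnPoly fun r : Fin n => ε ^ (r : ℕ)
    rw [← hQ, Fintype.card_fin] at this
    exact this.of_map hcast
  have hdvd : ∀ m ∈ Q.support, ∀ i, n ∣ m i := fun m hm i =>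
    dvd_of_aeval_mulSingle_eq_self hε i (aeval_mulSingle_pnPoly hε.pow_eq_one i)
      (by rwa [← hQ, support_map_of_injective _ hcast])
  obtain ⟨P, rfl⟩ := exists_expand_eq_of_forall_dvd hdvd
  refine ⟨P, hQhom.of_expand hn.ne', fun x y z => ?_⟩
  rw [pn_eq_eval_pnPoly, ← hQ, eval_map, eval₂_expand]
  congr 1
  funext i
  fin_cases i <;> simp [Complex.cpow_nat_inv_pow _ hn.ne']
end

section
/- For every positive integer n and complex numbers x, y, w with wⁿ = z, the polynomial p_n(z; x, y) equals the determinant of the n×n y-circulant matrix Circ_y(wⁿ + (−1)^{n+1}x + y, C(n,1)w, C(n,2)w², …, C(n,n−1)w^{n−1}), whose (i,j) entry is binom(n, j−i)·w^{j−i}·y when j > i (for the off-diagonal part above the diagonal multiplied by y), binom(n, n+j−i)·w^{n+j−i} when j < i, and wⁿ + (−1)^{n+1}x + y on the diagonal. -/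
open Matrix

/-!
Let `ε` be a primitive `n`-th root of unity and `ξⁿ = x`, `ηⁿ = y`. Since
`∏ᵣ (A + εʳ ξ) = Aⁿ - (-ξ)ⁿ = Aⁿ + (-1)ⁿ⁺¹ x`, and since replacing `z^(1/n)` by another `n`-th root
`w` of `z` only permutes the factors of `p_n`, we get `p_n = ∏ₛ ((w + εˢ η)ⁿ + (-1)ⁿ⁺¹ x)`.

For `tⁿ = y`, the vector `(t⁻ʲ)ⱼ` is an eigenvector of the `y`-circulant with eigenvalue
`a₀ + ∑_{k ≥ 1} aₖ tⁿ⁻ᵏ`, which for the binomial coefficients `aₖ = C(n,k) wᵏ` is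
`(w + t)ⁿ + (-1)ⁿ⁺¹ x`. For `y ≠ 0` the `n` roots `t = εˢ η` give a Vandermonde eigenbasis, and for
`y = 0` the matrix is triangular; either way the determinant is the product of these eigenvalues.
-/

open Finset

section RootsOfUnity

variable {R : Type*} [CommRing R] [IsDomain R] {n : ℕ} {ζ : R}

theorem IsPrimitiveRoot.prod_mul_pow_eq {M : Type*} [CommMonoid M] (hζ : IsPrimitiveRoot ζ n)
    {μ : R} (hμ : μ ^ n = 1) (f : R → M) :
    ∏ r : Fin n, f (μ * ζ ^ (r : ℕ)) = ∏ r : Fin n, f (ζ ^ (r : ℕ)) := by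
  obtain rfl | hn := n.eq_zero_or_pos
  · simp
  have := NeZero.of_pos hn
  obtain ⟨c, -, rfl⟩ := hζ.eq_pow_of_pow_eq_one hμ
  refine Fintype.prod_equiv (Equiv.addLeft (Fin.ofNat n c)) _ _ fun r => ?_
  rw [← pow_add, pow_eq_pow_mod _ hζ.pow_eq_one, Equiv.coe_addLeft, Fin.val_add, Fin.val_ofNat,
    Nat.mod_add_mod]

theorem IsPrimitiveRoot.prod_prod_mul_pow_eq {M : Type*} [CommMonoid M]
    (hζ : IsPrimitiveRoot ζ n) {μ : R} (hμ : μ ^ n = 1) (f : R → R → M) :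
    ∏ r : Fin n, ∏ s : Fin n, f (μ * ζ ^ (r : ℕ)) (μ * ζ ^ (s : ℕ))
      = ∏ r : Fin n, ∏ s : Fin n, f (ζ ^ (r : ℕ)) (ζ ^ (s : ℕ)) :=
  (prod_congr rfl fun _ _ => hζ.prod_mul_pow_eq hμ (f _)).trans
    (hζ.prod_mul_pow_eq hμ fun a => ∏ s : Fin n, f a (ζ ^ (s : ℕ)))

theorem IsPrimitiveRoot.prod_add_pow_mul (hζ : IsPrimitiveRoot ζ n) (hn : 0 < n) (A B : R) :
    ∏ r : Fin n, (A + ζ ^ (r : ℕ) * B) = A ^ n - (-B) ^ n := by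
  have := congrArg (Polynomial.eval A) (X_pow_sub_C_eq_prod hζ hn (rfl : (-B) ^ n = _))
  simpa [Polynomial.eval_prod, Fin.prod_univ_eq_prod_range (fun k => A + ζ ^ k * B)] using this.symm

theorem IsPrimitiveRoot.prod_prod_add_eq_of_pow_eq (hζ : IsPrimitiveRoot ζ n) {u v : R}
    (h : u ^ n = v ^ n) (ξ η : R) :
    ∏ r : Fin n, ∏ s : Fin n, (u + ζ ^ (r : ℕ) * ξ + ζ ^ (s : ℕ) * η)
      = ∏ r : Fin n, ∏ s : Fin n, (v + ζ ^ (r : ℕ) * ξ + ζ ^ (s : ℕ) * η) := by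
  obtain rfl | hn := n.eq_zero_or_pos
  · simp
  obtain ⟨c, -, rfl⟩ : ∃ c < n, ζ ^ c * v = u := by
    simpa [hζ.nthRoots_eq rfl] using (Polynomial.mem_nthRoots hn).2 h
  have hμ : (ζ ^ c) ^ n = 1 := by rw [pow_right_comm, hζ.pow_eq_one, one_pow]
  calc ∏ r : Fin n, ∏ s : Fin n, (ζ ^ c * v + ζ ^ (r : ℕ) * ξ + ζ ^ (s : ℕ) * η)
      = ∏ r : Fin n, ∏ s : Fin n,
          (ζ ^ c * v + ζ ^ c * ζ ^ (r : ℕ) * ξ + ζ ^ c * ζ ^ (s : ℕ) * η) :=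
        (hζ.prod_prod_mul_pow_eq hμ fun a b => ζ ^ c * v + a * ξ + b * η).symm
    _ = ∏ r : Fin n, ∏ s : Fin n, ζ ^ c * (v + ζ ^ (r : ℕ) * ξ + ζ ^ (s : ℕ) * η) := by
        simp only [mul_add, mul_assoc]
    _ = _ := by simp only [prod_mul_distrib, prod_const, card_univ, Fintype.card_fin, hμ, one_mul]

end RootsOfUnity

section YCirculant

variable {K : Type*} [Field K] {n : ℕ}

def yCirculant (y : K) (a : Fin n → K) : Matrix (Fin n) (Fin n) K :=
  Matrix.of fun i j => (if i < j then y else 1) * a (j - i)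

/-- When `t ^ n = y` this is `a 0 + ∑_{k ≥ 1} a k * t ^ (n - k)`, the eigenvalue of `yCirculant y a`
on the eigenvector `(t⁻¹ ^ j)ⱼ`. -/
def yCirculantEigenvalue (a : Fin n → K) (t : K) : K :=
  ∑ k, a k * t ^ ((-k : Fin n) : ℕ)

theorem ite_pow_mul_inv_pow {t : K} (ht : t ≠ 0) (i j : Fin n) :
    (if i < j then t ^ n else 1) * t⁻¹ ^ (j : ℕ) = t⁻¹ ^ (i : ℕ) * t ^ ((i - j : Fin n) : ℕ) := by
  rw [inv_pow, inv_pow]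
  split_ifs with h
  · rw [Fin.coe_sub_iff_lt.2 h]
    field_simp
    rw [← pow_add, ← pow_add]
    congr 1
    omega
  · rw [Fin.coe_sub_iff_le.2 (not_lt.1 h)]
    field_simp
    rw [← pow_add]
    congr 1
    omega

theorem yCirculant_mulVec_inv_pow [NeZero n] (a : Fin n → K) {t : K} (ht : t ≠ 0) :
    yCirculant (t ^ n) a *ᵥ (fun j => t⁻¹ ^ (j : ℕ))
      = yCirculantEigenvalue a t • fun i : Fin n => t⁻¹ ^ (i : ℕ) := by
  ext i
  simp only [Matrix.mulVec, dotProduct, yCirculant, Matrix.of_apply, Pi.smul_apply, smul_eq_mul]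
  calc ∑ j, (if i < j then t ^ n else 1) * a (j - i) * t⁻¹ ^ (j : ℕ)
      = ∑ j, t⁻¹ ^ (i : ℕ) * (a (j - i) * t ^ ((-(j - i) : Fin n) : ℕ)) := by
        refine sum_congr rfl fun j _ => ?_
        rw [neg_sub, mul_right_comm, ite_pow_mul_inv_pow ht]
        ring
    _ = t⁻¹ ^ (i : ℕ) * yCirculantEigenvalue a t := by
        rw [← mul_sum, yCirculantEigenvalue]
        exact congrArg _ (Fintype.sum_equiv (Equiv.subRight i) _ _ fun j => rfl)
    _ = _ := mul_comm _ _

theorem yCirculantEigenvalue_zero [NeZero n] (a : Fin n → K) : yCirculantEigenvalue a 0 = a 0 := by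
  rw [yCirculantEigenvalue, Fintype.sum_eq_single 0]
  · simp
  · intro k hk
    have hk' : ((-k : Fin n) : ℕ) ≠ 0 := by
      rw [Fin.val_neg, if_neg hk]
      omega
    rw [zero_pow hk', mul_zero]

theorem det_eq_prod_of_mul_eq_mul_diagonal {R ι : Type*} [CommRing R] [IsDomain R] [Fintype ι]
    [DecidableEq ι] {M V : Matrix ι ι R} {d : ι → R} (h : M * V = V * Matrix.diagonal d)
    (hV : V.det ≠ 0) : M.det = ∏ i, d i := by
  have := congrArg Matrix.det h
  rw [Matrix.det_mul, Matrix.det_mul, Matrix.det_diagonal, mul_comm V.det] at this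
  exact mul_right_cancel₀ hV this

theorem IsPrimitiveRoot.det_yCirculant {ζ : K} (hζ : IsPrimitiveRoot ζ n) (a : Fin n → K) (t : K) :
    (yCirculant (t ^ n) a).det = ∏ b : Fin n, yCirculantEigenvalue a (ζ ^ (b : ℕ) * t) := by
  obtain rfl | hn := n.eq_zero_or_pos
  · simp
  have := NeZero.of_pos hn
  by_cases ht : t = 0
  · subst ht
    rw [Matrix.det_of_isLowerTriangular]
    · simp [yCirculant, yCirculantEigenvalue_zero]
    · intro i j (hij : i < j)
      simp [yCirculant, hij, zero_pow hn.ne']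
  have hroot : ∀ b : Fin n, (ζ ^ (b : ℕ) * t) ^ n = t ^ n := fun b => by
    rw [mul_pow, pow_right_comm, hζ.pow_eq_one, one_pow, one_mul]
  have hne : ∀ b : Fin n, ζ ^ (b : ℕ) * t ≠ 0 := fun b =>
    mul_ne_zero (pow_ne_zero _ (hζ.ne_zero hn.ne')) ht
  refine det_eq_prod_of_mul_eq_mul_diagonal
    (V := (Matrix.vandermonde fun b => (ζ ^ (b : ℕ) * t)⁻¹)ᵀ) ?_ ?_
  · ext i b
    rw [Matrix.mul_diagonal]
    have := congrFun (yCirculant_mulVec_inv_pow a (hne b)) i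
    rw [hroot] at this
    simpa [Matrix.mul_apply, Matrix.mulVec, dotProduct, mul_comm] using this
  · rw [Matrix.det_transpose, Matrix.det_vandermonde_ne_zero_iff]
    intro b c hbc
    exact Fin.ext (hζ.pow_inj b.isLt c.isLt (mul_right_cancel₀ ht (inv_injective hbc)))

end YCirculant

section BinomialCoeffs

variable {K : Type*} [Field K]

def binomialCoeffs (n : ℕ) (w A : K) : Fin n → K :=
  fun k => if (k : ℕ) = 0 then A else n.choose k * w ^ (k : ℕ)

theorem yCirculantEigenvalue_binomialCoeffs {n : ℕ} (hn : 0 < n) (w A t : K) :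
    yCirculantEigenvalue (binomialCoeffs n w A) t = A + (w + t) ^ n - w ^ n - t ^ n := by
  obtain ⟨m, rfl⟩ := Nat.exists_eq_succ_of_ne_zero hn.ne'
  have hneg : ∀ k : Fin m, ((-k.succ : Fin (m + 1)) : ℕ) = m - k := fun k => by
    rw [Fin.val_neg, if_neg (Fin.succ_ne_zero k), Fin.val_succ]
    omega
  rw [yCirculantEigenvalue, Fin.sum_univ_succ, add_pow, sum_range_succ, sum_range_succ']
  simp only [binomialCoeffs, hneg, Fin.val_succ, Fin.val_zero, neg_zero, if_true,
    Nat.succ_ne_zero, if_false]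
  rw [Fin.sum_univ_eq_sum_range (fun k => ((m + 1).choose (k + 1) : K) * w ^ (k + 1) * t ^ (m - k))]
  simp only [Nat.succ_eq_add_one, Nat.add_sub_add_right, Nat.sub_zero, Nat.sub_self,
    Nat.choose_zero_right, Nat.choose_self]
  rw [sum_congr rfl fun k _ =>
    (mul_comm _ ((m + 1).choose (k + 1) : K)).trans (mul_assoc _ _ _).symm]
  ring

theorem yCirculant_binomialCoeffs {n : ℕ} (w A y : K) :
    yCirculant y (binomialCoeffs n w A) = Matrix.of fun i j : Fin n =>
      if i = j then A
      else if (i : ℕ) < (j : ℕ) then y * (n.choose ((j : ℕ) - (i : ℕ))) * w ^ ((j : ℕ) - (i : ℕ))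
      else (n.choose (n + (j : ℕ) - (i : ℕ))) * w ^ (n + (j : ℕ) - (i : ℕ)) := by
  ext i j
  simp only [yCirculant, binomialCoeffs, Matrix.of_apply]
  rcases lt_trichotomy i j with h | rfl | h
  · have h' : (i : ℕ) < j := h
    rw [if_neg h.ne, if_pos h', if_pos h, Fin.coe_sub_iff_le.2 h.le, if_neg (by omega), mul_assoc]
  · rw [if_pos rfl, if_neg (lt_irrefl i), Fin.coe_sub_iff_le.2 le_rfl, Nat.sub_self, if_pos rfl,
      one_mul]
  · have h' : ¬ (i : ℕ) < j := not_lt.2 h.le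
    rw [if_neg h.ne', if_neg h', if_neg (lt_asymm h), Fin.coe_sub_iff_lt.2 h, if_neg (by omega),
      one_mul]

theorem IsPrimitiveRoot.det_yCirculant_binomialCoeffs {n : ℕ} {ζ : K} (hζ : IsPrimitiveRoot ζ n)
    (hn : 0 < n) (w ξ η : K) :
    (yCirculant (η ^ n) (binomialCoeffs n w (w ^ n + (-1) ^ (n + 1) * ξ ^ n + η ^ n))).det
      = ∏ r : Fin n, ∏ s : Fin n, (w + ζ ^ (r : ℕ) * ξ + ζ ^ (s : ℕ) * η) := by
  rw [hζ.det_yCirculant, prod_comm]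
  refine prod_congr rfl fun s _ => ?_
  rw [yCirculantEigenvalue_binomialCoeffs hn, mul_pow, pow_right_comm, hζ.pow_eq_one, one_pow,
    one_mul, ← prod_congr rfl fun r _ => add_right_comm w _ _, hζ.prod_add_pow_mul hn, neg_pow]
  ring

end BinomialCoeffs

theorem pn_eq_prod_prod {n : ℕ} (hn : 0 < n) (z x y : ℂ) :
    pn n z x y = ∏ r : Fin n, ∏ s : Fin n,
      (z ^ (n : ℂ)⁻¹ + Complex.exp (2 * Real.pi * Complex.I / n) ^ (r : ℕ) * x ^ (n : ℂ)⁻¹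
        + Complex.exp (2 * Real.pi * Complex.I / n) ^ (s : ℕ) * y ^ (n : ℂ)⁻¹) := by
  set ε := Complex.exp (2 * Real.pi * Complex.I / n)
  have hε : IsPrimitiveRoot ε n := Complex.isPrimitiveRoot_exp n hn.ne'
  have hexp : ∀ m : ℕ, Complex.exp (2 * Real.pi * Complex.I * ((m : ℂ) + 1) / n) = ε * ε ^ m := by
    intro m
    rw [← pow_succ', ← Complex.exp_nat_mul]
    congr 1
    push_cast
    ring
  simp only [pn, hexp]
  exact hε.prod_prod_mul_pow_eq hε.pow_eq_one
    fun a b => z ^ (n : ℂ)⁻¹ + a * x ^ (n : ℂ)⁻¹ + b * y ^ (n : ℂ)⁻¹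

theorem statement8 (n : ℕ) (hn : 0 < n) (x y z w : ℂ) (hw : w ^ n = z) :
    pn n z x y = Matrix.det (Matrix.of fun i j : Fin n =>
      if i = j then w ^ n + (-1) ^ (n + 1) * x + y
      else if (i : ℕ) < (j : ℕ) then
        y * (n.choose ((j : ℕ) - (i : ℕ))) * w ^ ((j : ℕ) - (i : ℕ))
      else (n.choose (n + (j : ℕ) - (i : ℕ))) * w ^ (n + (j : ℕ) - (i : ℕ))) := by
  have hε := Complex.isPrimitiveRoot_exp n hn.ne'
  have hroot : ∀ u : ℂ, (u ^ (n : ℂ)⁻¹) ^ n = u := fun u => Complex.cpow_nat_inv_pow u hn.ne'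
  rw [pn_eq_prod_prod hn, hε.prod_prod_add_eq_of_pow_eq (v := w) (by rw [hw, hroot]),
    ← hε.det_yCirculant_binomialCoeffs hn, hroot, hroot, yCirculant_binomialCoeffs]
end

section
/- For every prime p ≥ 5, the binomial coefficient binom(2p−1, p−1) is congruent to 1 modulo p³ (Wolstenholme's theorem). -/
/-!
Write `p = 2m + 1` and pair the factors `p + k` and `2p - k` of
`(p + 1) ⋯ (2p - 1) = C(2p-1, p-1) · (p-1)!`: their product is `k (p - k) + 2p²`, while
`(p - 1)! = ∏_{k ≤ m} k (p - k)`. As `(2p²)² ≡ 0 mod p³`, expanding the product of the `m`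
pairs leaves only the term linear in `2p²`, so it suffices that `p` divides
`∑_i ∏_{j ≠ i} j (p - j) = (p - 1)! · ∑_{k ≤ m} 1 / (k (p - k))`.
Modulo `p` this is `-(p - 1)! · ∑_{k ≤ m} k⁻²`, and twice that sum is
`∑_{x ∈ 𝔽_p} x⁻² = ∑_{x ∈ 𝔽_p} x² = 0` for `p > 3`.
-/

open Finset Nat

namespace Finset

theorem prod_add_of_sq_eq_zero {ι R : Type*} [CommRing R] [DecidableEq ι] (s : Finset ι)
    (a : ι → R) {c : R} (hc : c ^ 2 = 0) :
    ∏ i ∈ s, (a i + c) = ∏ i ∈ s, a i + c * ∑ i ∈ s, ∏ j ∈ s.erase i, a j := by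
  induction s using Finset.induction_on with
  | empty => simp
  | insert x s hx ih =>
    have herase : ∀ j ∈ s, ∏ k ∈ (insert x s).erase j, a k = a x * ∏ k ∈ s.erase j, a k :=
      fun j hj => by
        rw [erase_insert_of_ne (ne_of_mem_of_not_mem hj hx).symm, prod_insert (by simp [hx])]
    rw [prod_insert hx, prod_insert hx, ih, sum_insert hx, erase_insert hx, sum_congr rfl herase,
      ← mul_sum]
    linear_combination (∑ i ∈ s, ∏ j ∈ s.erase i, a j) * hc

theorem sum_prod_erase_eq_prod_mul_sum_inv {ι K : Type*} [Field K] [DecidableEq ι]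
    (s : Finset ι) {a : ι → K} (ha : ∀ i ∈ s, a i ≠ 0) :
    ∑ i ∈ s, ∏ j ∈ s.erase i, a j = (∏ i ∈ s, a i) * ∑ i ∈ s, (a i)⁻¹ := by
  rw [mul_sum]
  refine sum_congr rfl fun i hi => ?_
  rw [← prod_erase_mul s a hi, mul_assoc, mul_inv_cancel₀ (ha i hi), mul_one]

theorem prod_range_two_mul {M : Type*} [CommMonoid M] (f : ℕ → M) (m : ℕ) :
    ∏ i ∈ range (2 * m), f i = ∏ i ∈ range m, f i * f (2 * m - 1 - i) := by
  rw [two_mul, prod_range_add, prod_mul_distrib, ← prod_range_reflect (fun i => f (m + i)) m]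
  refine congrArg _ (prod_congr rfl fun i hi => congrArg f ?_)
  have := mem_range.mp hi
  omega

theorem sum_range_two_mul {M : Type*} [AddCommMonoid M] (f : ℕ → M) (m : ℕ) :
    ∑ i ∈ range (2 * m), f i = ∑ i ∈ range m, (f i + f (2 * m - 1 - i)) := by
  rw [two_mul, sum_range_add, sum_add_distrib, ← sum_range_reflect (fun i => f (m + i)) m]
  refine congrArg _ (sum_congr rfl fun i hi => congrArg f ?_)
  have := mem_range.mp hi
  omega

end Finset

theorem ZMod.sum_range_natCast {M : Type*} [AddCommMonoid M] (n : ℕ) [NeZero n]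
    (f : ZMod n → M) : ∑ i ∈ range n, f i = ∑ x, f x :=
  sum_nbij' (↑) ZMod.val (fun _ _ => mem_univ _) (fun x _ => mem_range.mpr x.val_lt)
    (fun i hi => ZMod.val_natCast_of_lt (mem_range.mp hi)) (fun x _ => by simp) (fun _ _ => rfl)

theorem ZMod.sum_eq_add_two_nsmul_sum_range_of_even {M : Type*} [AddCommMonoid M] (m : ℕ)
    {f : ZMod (2 * m + 1) → M} (hf : ∀ x, f (-x) = f x) :
    ∑ x, f x = f 0 + 2 • ∑ i ∈ range m, f (i + 1) := by
  have hreflect : ∑ i ∈ range m, f ↑(2 * m - 1 - i + 1) = ∑ i ∈ range m, f (i + 1) := by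
    refine sum_congr rfl fun i hi => ?_
    have hsum : (2 * m - 1 - i + 1) + (i + 1) = 2 * m + 1 := by have := mem_range.mp hi; omega
    have hneg : ((2 * m - 1 - i + 1 : ℕ) : ZMod (2 * m + 1)) = -(i + 1) := by
      rw [eq_neg_iff_add_eq_zero, ← Nat.cast_succ, ← Nat.cast_add, hsum, ZMod.natCast_self]
    rw [hneg, hf]
  rw [← ZMod.sum_range_natCast, sum_range_succ', sum_range_two_mul, sum_add_distrib, hreflect,
    two_nsmul, Nat.cast_zero, add_comm]
  simp only [Nat.cast_succ]

theorem FiniteField.sum_inv_pow_eq_zero {K : Type*} [Field K] [Fintype K] {i : ℕ}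
    (h : i < Fintype.card K - 1) : ∑ x : K, (x ^ i)⁻¹ = 0 := by
  simp_rw [← inv_pow]
  exact (Equiv.sum_comp (Equiv.inv K) (· ^ i)).trans (FiniteField.sum_pow_lt_card_sub_one K i h)

theorem Nat.prod_add_modEq_prod {ι : Type*} [DecidableEq ι] (s : Finset ι) (a : ι → ℕ)
    {n c : ℕ} (hc : n ∣ c ^ 2) (hsum : n ∣ c * ∑ i ∈ s, ∏ j ∈ s.erase i, a j) :
    ∏ i ∈ s, (a i + c) ≡ ∏ i ∈ s, a i [MOD n] := by
  rw [← ZMod.natCast_eq_natCast_iff]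
  have hc' : (c : ZMod n) ^ 2 = 0 := by exact_mod_cast (ZMod.natCast_eq_zero_iff _ _).mpr hc
  have hsum' : (c : ZMod n) * ∑ i ∈ s, ∏ j ∈ s.erase i, (a j : ZMod n) = 0 := by
    exact_mod_cast (ZMod.natCast_eq_zero_iff _ _).mpr hsum
  push_cast
  rw [prod_add_of_sq_eq_zero _ _ hc', hsum', add_zero]

theorem Nat.factorial_sub_one_eq_prod_range_mul_sub {p m : ℕ} (hm : p = 2 * m + 1) :
    (p - 1)! = ∏ i ∈ range m, (i + 1) * (p - (i + 1)) := by
  rw [show p - 1 = 2 * m by omega, ← prod_range_add_one_eq_factorial, prod_range_two_mul]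
  refine prod_congr rfl fun i hi => congrArg _ ?_
  have := mem_range.mp hi
  omega

theorem Nat.choose_mul_factorial_eq_prod_range_mul_sub_add {p m : ℕ} (hm : p = 2 * m + 1) :
    (2 * p - 1).choose (p - 1) * (p - 1)! =
      ∏ i ∈ range m, ((i + 1) * (p - (i + 1)) + 2 * p ^ 2) := by
  have hasc := Nat.ascFactorial_eq_factorial_mul_choose p (p - 1)
  rw [show p + (p - 1) = 2 * p - 1 by omega, mul_comm] at hasc
  rw [← hasc, ascFactorial_eq_prod_range, show p - 1 = 2 * m by omega, prod_range_two_mul]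
  refine prod_congr rfl fun i hi => ?_
  obtain ⟨k, rfl⟩ : ∃ k, m = i + 1 + k := ⟨m - (i + 1), by have := mem_range.mp hi; omega⟩
  subst hm
  rw [show 2 * (i + 1 + k) - 1 - i = i + 1 + 2 * k by omega,
    show 2 * (i + 1 + k) + 1 - (i + 1) = i + 2 + 2 * k by omega]
  ring

theorem ZMod.sum_range_inv_sq_eq_zero {p m : ℕ} [Fact p.Prime] (h3 : 3 < p) (hm : p = 2 * m + 1) :
    ∑ i ∈ range m, (((i : ZMod p) + 1) ^ 2)⁻¹ = 0 := by
  subst hm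
  have hsum := ZMod.sum_eq_add_two_nsmul_sum_range_of_even m (f := fun x => (x ^ 2)⁻¹)
    (by simp only [neg_sq, implies_true])
  rw [FiniteField.sum_inv_pow_eq_zero (by rw [ZMod.card]; omega), nsmul_eq_mul] at hsum
  have h2 : ((2 : ℕ) : ZMod (2 * m + 1)) ≠ 0 := by
    rw [Ne, ZMod.natCast_eq_zero_iff]
    exact Nat.not_dvd_of_pos_of_lt two_pos (by omega)
  rw [zero_pow two_ne_zero, inv_zero, zero_add] at hsum
  exact (mul_eq_zero.mp hsum.symm).resolve_left h2

theorem Nat.Prime.dvd_sum_prod_erase_mul_sub {p m : ℕ} (hp : p.Prime) (h3 : 3 < p)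
    (hm : p = 2 * m + 1) :
    p ∣ ∑ i ∈ range m, ∏ j ∈ (range m).erase i, (j + 1) * (p - (j + 1)) := by
  have := Fact.mk hp
  have hne : ∀ j ∈ range m, (j : ZMod p) + 1 ≠ 0 := fun j hj => by
    rw [← Nat.cast_succ, Ne, ZMod.natCast_eq_zero_iff]
    exact Nat.not_dvd_of_pos_of_lt j.succ_pos (by have := mem_range.mp hj; omega)
  have hcast : ∀ j ∈ range m,
      (((j + 1) * (p - (j + 1)) : ℕ) : ZMod p) = -((j : ZMod p) + 1) ^ 2 := fun j hj => by
    rw [Nat.cast_mul, Nat.cast_sub (by have := mem_range.mp hj; omega), ZMod.natCast_self]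
    push_cast
    ring
  rw [← ZMod.natCast_eq_zero_iff, Nat.cast_sum, sum_congr rfl fun i _ => by
      rw [Nat.cast_prod, prod_congr rfl fun j hj => hcast j (mem_of_mem_erase hj)],
    sum_prod_erase_eq_prod_mul_sum_inv _ fun j hj => neg_ne_zero.mpr (pow_ne_zero 2 (hne j hj))]
  simp_rw [inv_neg]
  rw [sum_neg_distrib, ZMod.sum_range_inv_sq_eq_zero h3 hm, neg_zero, mul_zero]

theorem statement11 (p : ℕ) (hp : p.Prime) (h5 : 5 ≤ p) :
    (2 * p - 1).choose (p - 1) ≡ 1 [MOD p ^ 3] := by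
  obtain ⟨m, hm⟩ := hp.odd_of_ne_two (by omega)
  have hprod : (2 * p - 1).choose (p - 1) * (p - 1)! ≡ 1 * (p - 1)! [MOD p ^ 3] := by
    rw [Nat.choose_mul_factorial_eq_prod_range_mul_sub_add hm, one_mul,
      Nat.factorial_sub_one_eq_prod_range_mul_sub hm]
    refine Nat.prod_add_modEq_prod _ _ ⟨4 * p, by ring⟩ ?_
    rw [pow_succ]
    exact mul_dvd_mul (dvd_mul_left _ _) (hp.dvd_sum_prod_erase_mul_sub (by omega) hm)
  exact hprod.cancel_right_of_coprime ((hp.coprime_factorial_of_lt (by omega)).pow_left 3)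
end

section
/- For every positive integer n, p_n(z; x, y) = (−1)ⁿ · Res_t(z − (u + vt)ⁿ, tⁿ − 1), where uⁿ = (−1)ⁿx and vⁿ = (−1)ⁿy are fixed n-th roots. -/
open Polynomial

/-- The resultant of `f` (of degree `m`) and `g` (of degree `n`), as the determinant
of the `(n + m) × (n + m)` Sylvester matrix: the first `n` rows carry the
coefficients of `f`, the last `m` rows those of `g`. -/
noncomputable def resultant {R : Type*} [CommRing R] (m n : ℕ) (f g : Polynomial R) : R :=
  Matrix.det (Matrix.of fun i j : Fin (n + m) =>
    if (i : ℕ) < n then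
      (if (i : ℕ) ≤ (j : ℕ) ∧ (j : ℕ) ≤ (i : ℕ) + m then f.coeff (m + i - j) else 0)
    else
      (if (i : ℕ) - n ≤ (j : ℕ) ∧ (j : ℕ) ≤ ((i : ℕ) - n) + n then
        g.coeff (n + ((i : ℕ) - n) - (j : ℕ)) else 0))

/-!
Since `tⁿ - 1` is monic and splits, the resultant is, up to the sign `(-1)^(n·n)`, the product
of `z - (u + v ω)ⁿ` over the `n`-th roots of unity `ω`. Writing
`z = Zⁿ`, each factor splits as `∏ r, (Z - ζʳ (u + v ω)) = ∏ r, (Z + ζʳ (-u) + ζʳ ω (-v))`.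
For fixed `r`, `ζʳ ω (-v)` runs through all `n`-th roots of `y` as `ω` does, and then `ζʳ (-u)`
runs through all `n`-th roots of `x`; this is the double product defining `pn`.
-/

theorem resultant_eq_polynomial_resultant {R : Type*} [CommRing R] (m n : ℕ) (f g : R[X]) :
    _root_.resultant m n f g = f.resultant g m n := by
  -- Reversing both index orders turns the row convention of `resultant` into the transpose
  -- of the column convention of `Polynomial.sylvester`.
  let e : Fin (n + m) ≃ Fin (m + n) := Fin.revPerm.trans (finCongr (add_comm n m))
  rw [Polynomial.resultant, ← Matrix.det_transpose, ← Matrix.det_submatrix_equiv_self e,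
    _root_.resultant]
  congr 1
  ext ⟨i, hi⟩ ⟨j, hj⟩
  simp only [Matrix.of_apply, Matrix.submatrix_apply, Matrix.transpose_apply, sylvester, e,
    Equiv.trans_apply, Fin.revPerm_apply, finCongr_apply, Fin.addCases, Fin.val_rev,
    Fin.val_cast, Fin.val_castLT, Fin.val_subNat, Set.mem_Icc, eq_rec_constant]
  split_ifs <;> first | rfl | omega | (congr 1; omega)

section RootsOfUnity

variable {K : Type*} [CommRing K] [IsDomain K] {n : ℕ} {ζ : K}

theorem IsPrimitiveRoot.prod_range_pow_mul_eq_prod_nthRoots {M : Type*} [CommMonoid M]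
    (hζ : IsPrimitiveRoot ζ n) {α a : K} (hα : α ^ n = a) (G : K → M) :
    ∏ i ∈ Finset.range n, G (ζ ^ i * α) = ((nthRoots n a).map G).prod := by
  rw [hζ.nthRoots_eq hα, Multiset.map_map]
  rfl

theorem IsPrimitiveRoot.pow_sub_pow_eq_prod_range (hζ : IsPrimitiveRoot ζ n) (hn : 0 < n)
    (w c : K) :
    w ^ n - c ^ n = ∏ i ∈ Finset.range n, (w - ζ ^ i * c) := by
  simpa [eval_prod] using congrArg (eval w) (X_pow_sub_C_eq_prod hζ hn (rfl : c ^ n = c ^ n))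

theorem IsPrimitiveRoot.prod_nthRoots_one_sub_pow (hζ : IsPrimitiveRoot ζ n) (hn : 0 < n)
    (w u v : K) :
    ((nthRoots n 1).map fun ω ↦ w ^ n - (u + v * ω) ^ n).prod =
      ((nthRoots n ((-u) ^ n)).map fun α ↦
        ((nthRoots n ((-v) ^ n)).map fun β ↦ w + α + β).prod).prod := by
  calc ((nthRoots n 1).map fun ω ↦ w ^ n - (u + v * ω) ^ n).prod
      = ∏ j ∈ Finset.range n, ∏ i ∈ Finset.range n,
          (w + ζ ^ i * -u + ζ ^ j * (ζ ^ i * -v)) := by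
        rw [← hζ.prod_range_pow_mul_eq_prod_nthRoots (one_pow n)]
        refine Finset.prod_congr rfl fun j _ ↦ ?_
        rw [hζ.pow_sub_pow_eq_prod_range hn]
        exact Finset.prod_congr rfl fun i _ ↦ by ring
    _ = ∏ i ∈ Finset.range n, ((nthRoots n ((-v) ^ n)).map fun β ↦ w + ζ ^ i * -u + β).prod := by
        rw [Finset.prod_comm]
        refine Finset.prod_congr rfl fun i _ ↦ ?_
        exact hζ.prod_range_pow_mul_eq_prod_nthRoots (by rw [mul_pow, ← pow_mul',
          pow_mul, hζ.pow_eq_one, one_pow, one_mul]) _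
    _ = _ := hζ.prod_range_pow_mul_eq_prod_nthRoots rfl
      (fun α ↦ ((nthRoots n ((-v) ^ n)).map fun β ↦ w + α + β).prod)

theorem resultant_X_pow_sub_one (hn : 0 < n) (hsplit : (X ^ n - 1 : K[X]).Splits) (F : K[X])
    (hF : F.natDegree ≤ n) :
    F.resultant (X ^ n - 1) n n = (-1) ^ (n * n) * ((nthRoots n 1).map F.eval).prod := by
  have h := resultant_eq_prod_eval (X ^ n - C 1) F n hF (by rwa [C_1])
  rw [natDegree_X_pow_sub_C, leadingCoeff_X_pow_sub_C hn, one_pow, one_mul, ← nthRoots, C_1] at h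
  rw [resultant_comm, h]

end RootsOfUnity

theorem pn_eq_prod_nthRoots {n : ℕ} (hn : 0 < n) (z x y : ℂ) :
    pn n z x y = ((nthRoots n x).map fun α ↦
      ((nthRoots n y).map fun β ↦ z ^ (n : ℂ)⁻¹ + α + β).prod).prod := by
  set ζ := Complex.exp (2 * Real.pi * Complex.I / n)
  have hζ : IsPrimitiveRoot ζ n := Complex.isPrimitiveRoot_exp n hn.ne'
  have hexp (r : ℕ) : Complex.exp (2 * Real.pi * Complex.I * (r + 1) / n) = ζ ^ r * ζ := by
    rw [← pow_succ, ← Complex.exp_nat_mul]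
    congr 1
    push_cast
    ring
  have hroot (a : ℂ) : (ζ * a ^ (n : ℂ)⁻¹) ^ n = a := by
    rw [mul_pow, hζ.pow_eq_one, one_mul, Complex.cpow_nat_inv_pow a hn.ne']
  rw [← hζ.prod_range_pow_mul_eq_prod_nthRoots (hroot x), pn]
  simp_rw [hexp, ← hζ.prod_range_pow_mul_eq_prod_nthRoots (hroot y), Finset.prod_range, mul_assoc]

theorem statement14 (n : ℕ) (hn : 0 < n) (x y z u v : ℂ)
    (hu : u ^ n = (-1) ^ n * x) (hv : v ^ n = (-1) ^ n * y) :
    pn n z x y = (-1) ^ n * _root_.resultant n n (C z - (C u + C v * X) ^ n) (X ^ n - 1) := by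
  have hζ := Complex.isPrimitiveRoot_exp n hn.ne'
  have hneg {a b : ℂ} (h : a ^ n = (-1) ^ n * b) : (-a) ^ n = b := by
    rw [neg_pow, h, ← mul_assoc, ← mul_pow, neg_one_mul, neg_neg, one_pow, one_mul]
  have hdeg : (C z - (C u + C v * X) ^ n).natDegree ≤ n := by
    have hlin : (C u + C v * X).natDegree ≤ 1 := by compute_degree
    refine (natDegree_sub_le _ _).trans (max_le (by simp) ?_)
    exact natDegree_pow_le.trans (by simpa using Nat.mul_le_mul_left n hlin)
  have hsign : ((-1) ^ n * (-1) ^ (n * n) : ℂ) = 1 := by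
    rw [← pow_add, show n + n * n = n * (n + 1) by ring, (Nat.even_mul_succ_self n).neg_one_pow]
  rw [resultant_eq_polynomial_resultant, resultant_X_pow_sub_one hn (IsAlgClosed.splits _) _ hdeg,
    ← mul_assoc, hsign, one_mul, pn_eq_prod_nthRoots hn, ← hneg hu, ← hneg hv,
    ← hζ.prod_nthRoots_one_sub_pow hn, Complex.cpow_nat_inv_pow z hn.ne']
  simp
end
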